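/- arXiv:2003.09367 — 10 statements merged into one kernel-verified Lean document; each statement's English description precedes it below -/
import Mathlib

section
/- Let m, d be positive integers with d < m, let Ẋ : Ω → Matrix (Fin m) (Fin d) ℝ be ℋ-strongly measurable and of full column rank d μ-almost surely, and set Q := (ẊᵀẊ)⁻¹Ẋᵀ (so that Q·Ẋ = I_d almost surely). Let μvec : Ω → ℝ^d be integrable, let g : Ω → ℝ^m, let u̇ : Ω → ℝ^m be integrable with conditional expectation μ[u̇ | ℋ] = 0 almost everywhere (coordinatewise), and define ẏ := Ẋ ·ᵥ μvec + g + u̇. If every entry of Q ·ᵥ u̇ and of Q ·ᵥ g (hence of Q ·ᵥ ẏ) is integrable, then ∫ μvec dμ = ∫ (Q ·ᵥ ẏ − Q ·ᵥ g) dμ. (Identification of the average partial effect E(μ) in the correlated random coefficient panel model with time-varying endogeneity.) -/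
/-!
On the event where `Ẋ` has full column rank, `Q Ẋ = 1`, so `Q ẏ - Q g = μvec + Q u̇` almost surely
and it remains to show `E[Q u̇] = 0`. The entries of `Q` are measurable functions of `Ẋ`, hence
`ℋ`-measurable, and can be pulled out of `E[u̇ | ℋ] = 0`. Since `Q` need not be bounded, this is
done on the `ℋ`-measurable events where `Q` is bounded, which increase to `Ω`.
-/

open MeasureTheory Matrix Filter

section

variable {m n R : Type*} [Fintype m] [Fintype n]

theorem Continuous.measurable_comp_matrix {α β : Type*} {mα : MeasurableSpace α}
    [TopologicalSpace β] [MeasurableSpace β] [BorelSpace β] {f : Matrix m n ℝ → β}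
    (hf : Continuous f) {A : α → Matrix m n ℝ} (hA : ∀ i j, Measurable fun x => A x i j) :
    Measurable fun x => f (A x) := by
  have hf' : Continuous fun X : m → n → ℝ => f (of X) := hf.comp continuous_id
  exact hf'.measurable.comp
    (measurable_pi_lambda _ fun i => measurable_pi_lambda _ fun j => hA i j)

namespace Matrix

variable [DecidableEq n]

theorem isUnit_of_rank_eq_card [Field R] {A : Matrix n n R} (h : A.rank = Fintype.card n) :
    IsUnit A := by
  rw [← mulVec_surjective_iff_isUnit, ← coe_mulVecLin, ← LinearMap.range_eq_top]
  apply Submodule.eq_top_of_finrank_eq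
  rw [← rank, h, Module.finrank_fintype_fun_eq_card]

theorem inv_transpose_mul_self_mul_transpose_mul_self [Field R]
    [LinearOrder R] [IsStrictOrderedRing R] {A : Matrix m n R} (h : A.rank = Fintype.card n) :
    (Aᵀ * A)⁻¹ * Aᵀ * A = 1 := by
  rw [Matrix.mul_assoc]
  exact nonsing_inv_mul _ <| (isUnit_iff_isUnit_det _).1 <|
    isUnit_of_rank_eq_card (by rw [rank_transpose_mul_self, h])

theorem measurable_inv_transpose_mul_self_mul_transpose_apply {α : Type*}
    {mα : MeasurableSpace α} {X : α → Matrix m n ℝ}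
    (hX : ∀ i j, Measurable fun x => X x i j) (i : n) (j : m) :
    Measurable fun x => (((X x)ᵀ * X x)⁻¹ * (X x)ᵀ) i j := by
  -- `A⁻¹ = (det A)⁻¹ • adjugate A` (with `0⁻¹ = 0`) is measurable though not continuous in `A`
  have hinv : ∀ A : Matrix m n ℝ,
      ((Aᵀ * A)⁻¹ * Aᵀ) i j = (Aᵀ * A).det⁻¹ * ((Aᵀ * A).adjugate * Aᵀ) i j := by
    intro A
    rw [inv_def, Ring.inverse_eq_inv', smul_mul, smul_apply, smul_eq_mul]
  simp_rw [hinv]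
  refine Measurable.mul (Measurable.inv ?_) ?_
  · exact Continuous.measurable_comp_matrix (f := fun A => (Aᵀ * A).det) (by fun_prop) hX
  · exact Continuous.measurable_comp_matrix (f := fun A => ((Aᵀ * A).adjugate * Aᵀ) i j)
      (by fun_prop) hX

end Matrix

end

section

variable {Ω E : Type*} {mΩ : MeasurableSpace Ω} {μ : Measure Ω}

theorem integral_eq_zero_of_setIntegral_eq_zero_of_monotone [NormedAddCommGroup E]
    [NormedSpace ℝ E] {f : Ω → E} (hf : Integrable f μ) {s : ℕ → Set Ω}
    (hs : ∀ n, MeasurableSet (s n)) (hmono : Monotone s) (hcover : ⋃ n, s n = Set.univ)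
    (h0 : ∀ n, ∫ x in s n, f x ∂μ = 0) :
    ∫ x, f x ∂μ = 0 := by
  have hlim := tendsto_setIntegral_of_monotone hs hmono (by rw [hcover]; exact hf.integrableOn)
  rw [hcover, setIntegral_univ] at hlim
  simp_rw [h0] at hlim
  exact tendsto_nhds_unique hlim tendsto_const_nhds

variable {ℋ : MeasurableSpace Ω} (hℋ : ℋ ≤ mΩ) [SigmaFinite (μ.trim hℋ)]
include hℋ

theorem integral_mul_eq_zero_of_condExp_eq_zero {φ u : Ω → ℝ} (hφ : StronglyMeasurable[ℋ] φ)
    (hφu : Integrable (φ * u) μ) (hu : Integrable u μ) (hce : μ[u | ℋ] =ᵐ[μ] 0) :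
    ∫ ω, (φ * u) ω ∂μ = 0 := by
  have hpull : μ[φ * u | ℋ] =ᵐ[μ] 0 := by
    filter_upwards [condExp_mul_of_stronglyMeasurable_left hφ hφu hu, hce] with ω h h'
    simp [h, h']
  rw [← integral_condExp hℋ, integral_congr_ae hpull, Pi.zero_def, integral_zero]

theorem integral_dotProduct_eq_zero_of_condExp_eq_zero {ι : Type*} [Fintype ι]
    {q u : Ω → ι → ℝ} (hq : ∀ j, StronglyMeasurable[ℋ] fun ω => q ω j)
    (hu : ∀ j, Integrable (fun ω => u ω j) μ) (hce : ∀ j, μ[fun ω => u ω j | ℋ] =ᵐ[μ] 0)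
    (hqu : Integrable (fun ω => q ω ⬝ᵥ u ω) μ) :
    ∫ ω, q ω ⬝ᵥ u ω ∂μ = 0 := by
  -- truncate `q` on the `ℋ`-measurable sets where it is bounded, so that each product is integrable
  set s : ℕ → Set Ω := fun n => {ω | ∑ j, |q ω j| ≤ n}
  have hs : ∀ n, MeasurableSet[ℋ] (s n) := fun n =>
    measurableSet_le (Finset.measurable_sum _ fun j _ => (hq j).measurable.abs) measurable_const
  have hmono : Monotone s := fun a b hab ω (hω : ∑ j, |q ω j| ≤ a) =>
    show ∑ j, |q ω j| ≤ b from hω.trans (by exact_mod_cast hab)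
  have hcover : ⋃ n, s n = Set.univ :=
    Set.eq_univ_of_forall fun ω => Set.mem_iUnion.2 (exists_nat_ge (∑ j, |q ω j|))
  refine integral_eq_zero_of_setIntegral_eq_zero_of_monotone hqu (fun n => hℋ _ (hs n)) hmono
    hcover fun n => ?_
  have hbound : ∀ j ω, ‖(s n).indicator (fun ω => q ω j) ω‖ ≤ n := by
    intro j ω
    by_cases hω : ω ∈ s n
    · rw [Set.indicator_of_mem hω, Real.norm_eq_abs]
      exact (Finset.single_le_sum (f := fun j => |q ω j|) (fun _ _ => abs_nonneg _)
        (Finset.mem_univ j)).trans hω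
    · simp [Set.indicator_of_notMem hω]
  have hqs : ∀ j, StronglyMeasurable[ℋ] ((s n).indicator fun ω => q ω j) :=
    fun j => (hq j).indicator (hs n)
  have hint : ∀ j, Integrable ((s n).indicator (fun ω => q ω j) * fun ω => u ω j) μ :=
    fun j => (hu j).bdd_mul ((hqs j).mono hℋ).aestronglyMeasurable
      (Eventually.of_forall (hbound j))
  calc ∫ ω in s n, q ω ⬝ᵥ u ω ∂μ
      = ∫ ω, ∑ j, ((s n).indicator (fun ω => q ω j) * fun ω => u ω j) ω ∂μ := by
        rw [← integral_indicator (hℋ _ (hs n))]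
        congr 1 with ω
        by_cases hω : ω ∈ s n <;> simp [hω, dotProduct]
    _ = 0 := by
        rw [integral_finsetSum _ fun j _ => hint j]
        exact Finset.sum_eq_zero fun j _ =>
          integral_mul_eq_zero_of_condExp_eq_zero hℋ (hqs j) (hint j) (hu j) (hce j)

end

theorem average_partial_effect_identification_general
    {Ω : Type*} {mΩ : MeasurableSpace Ω} (μ : Measure Ω) [IsProbabilityMeasure μ]
    (ℋ : MeasurableSpace Ω) (hℋ : ℋ ≤ mΩ)
    (m d : ℕ)
    (Xdot : Ω → Matrix (Fin m) (Fin d) ℝ)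
    (hXmeas : ∀ i j, StronglyMeasurable[ℋ] fun ω => Xdot ω i j)
    (hXrank : ∀ᵐ ω ∂μ, (Xdot ω).rank = d)
    (Q : Ω → Matrix (Fin d) (Fin m) ℝ)
    (hQ : ∀ ω, Q ω = ((Xdot ω)ᵀ * Xdot ω)⁻¹ * (Xdot ω)ᵀ)
    (μvec : Ω → Fin d → ℝ) (hμvec : Integrable μvec μ)
    (g : Ω → Fin m → ℝ)
    (udot : Ω → Fin m → ℝ) (hu_int : Integrable udot μ)
    (hu_ce : ∀ i, μ[(fun ω => udot ω i) | ℋ] =ᵐ[μ] 0)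
    (ydot : Ω → Fin m → ℝ)
    (hy : ∀ ω, ydot ω = Xdot ω *ᵥ μvec ω + g ω + udot ω)
    (hQu : ∀ i, Integrable (fun ω => (Q ω *ᵥ udot ω) i) μ) :
    ∫ ω, μvec ω ∂μ = ∫ ω, (Q ω *ᵥ ydot ω - Q ω *ᵥ g ω) ∂μ := by
  have hQX : ∀ᵐ ω ∂μ, Q ω * Xdot ω = 1 := hXrank.mono fun ω hω => by
    rw [hQ, inv_transpose_mul_self_mul_transpose_mul_self (by rw [hω, Fintype.card_fin])]
  have hQmeas : ∀ i j, StronglyMeasurable[ℋ] fun ω => Q ω i j := fun i j => by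
    simp_rw [hQ]
    exact (measurable_inv_transpose_mul_self_mul_transpose_apply
      (fun a b => (hXmeas a b).measurable) i j).stronglyMeasurable
  have hQu_zero : ∫ ω, Q ω *ᵥ udot ω ∂μ = 0 := funext fun i => by
    rw [eval_integral hQu, Pi.zero_apply]
    exact integral_dotProduct_eq_zero_of_condExp_eq_zero hℋ (hQmeas i) hu_int.eval hu_ce (hQu i)
  have hQy : ∀ᵐ ω ∂μ, Q ω *ᵥ ydot ω - Q ω *ᵥ g ω = μvec ω + Q ω *ᵥ udot ω :=
    hQX.mono fun ω hω => by
      rw [hy, mulVec_add, mulVec_add, mulVec_mulVec, hω, one_mulVec]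
      abel
  rw [integral_congr_ae hQy, integral_add hμvec (Integrable.of_eval hQu), hQu_zero, add_zero]

/-- Identification of the average partial effect `E(μ)` in the correlated random coefficient
panel model with time-varying endogeneity. -/
theorem average_partial_effect_identification
    {Ω : Type*} {mΩ : MeasurableSpace Ω} (μ : Measure Ω) [IsProbabilityMeasure μ]
    (ℋ : MeasurableSpace Ω) (hℋ : ℋ ≤ mΩ)
    (m d : ℕ) (hd : 0 < d) (hdm : d < m)
    (Xdot : Ω → Matrix (Fin m) (Fin d) ℝ)
    (hXmeas : ∀ i j, StronglyMeasurable[ℋ] fun ω => Xdot ω i j)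
    (hXrank : ∀ᵐ ω ∂μ, (Xdot ω).rank = d)
    (Q : Ω → Matrix (Fin d) (Fin m) ℝ)
    (hQ : ∀ ω, Q ω = ((Xdot ω)ᵀ * Xdot ω)⁻¹ * (Xdot ω)ᵀ)
    (μvec : Ω → Fin d → ℝ) (hμvec : Integrable μvec μ)
    (g : Ω → Fin m → ℝ)
    (udot : Ω → Fin m → ℝ) (hu_int : Integrable udot μ)
    (hu_ce : ∀ i, μ[(fun ω => udot ω i) | ℋ] =ᵐ[μ] 0)
    (ydot : Ω → Fin m → ℝ)
    (hy : ∀ ω, ydot ω = Xdot ω *ᵥ μvec ω + g ω + udot ω)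
    (hQu : ∀ i, Integrable (fun ω => (Q ω *ᵥ udot ω) i) μ)
    (hQg : ∀ i, Integrable (fun ω => (Q ω *ᵥ g ω) i) μ)
    (hQy : ∀ i, Integrable (fun ω => (Q ω *ᵥ ydot ω) i) μ) :
    ∫ ω, μvec ω ∂μ = ∫ ω, (Q ω *ᵥ ydot ω - Q ω *ᵥ g ω) ∂μ :=
  average_partial_effect_identification_general μ ℋ hℋ m d Xdot hXmeas hXrank Q hQ μvec hμvec g udot
    hu_int hu_ce ydot hy hQu
end

section
/- (i) The coordinatewise conditional expectation satisfies μ[M ·ᵥ ẏ | 𝒢] = ℳ ·ᵥ g μ-almost everywhere, where ℳ is the m×m random matrix with entries ℳ_{st} := μ[M_{st} | 𝒢]. (ii) If moreover ℳ(ω) is invertible for μ-almost every ω, then g = ℳ⁻¹ ·ᵥ μ[M ·ᵥ ẏ | 𝒢] μ-almost everywhere. (Closed-form identification of the endogeneity-correction function g.) -/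
/-!
Multiply `ẏ = h + g + u` by the projection `M`: the term `M h` vanishes. Conditioning the term
`M u` first on `ℋ`, with respect to which `M` is measurable, gives `M · μ[u | ℋ] = 0`, so by the
tower property it has zero conditional expectation given `𝒢 ≤ ℋ` as well. In the term `M g` the
factor `g` is `𝒢`-measurable and pulls out, leaving `μ[M | 𝒢] g = ℳ g`. Part (ii) is then
inversion of `ℳ`, pointwise.
-/

open MeasureTheory Matrix

namespace MeasureTheory

variable {Ω ι κ : Type*} {mΩ : MeasurableSpace Ω} {μ : Measure Ω} {𝒢 ℋ : MeasurableSpace Ω}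

noncomputable def condExpMatrix (μ : Measure Ω) (𝒢 : MeasurableSpace Ω)
    (A : Ω → Matrix ι κ ℝ) (ω : Ω) : Matrix ι κ ℝ :=
  fun s t => μ[fun ω' => A ω' s t | 𝒢] ω

lemma condExp_mulVec_apply [Fintype κ] (A : Ω → Matrix ι κ ℝ) (v : Ω → κ → ℝ) (s : ι)
    (hint : ∀ t, Integrable (fun ω => A ω s t * v ω t) μ) :
    μ[fun ω => (A ω *ᵥ v ω) s | 𝒢] =ᵐ[μ] ∑ t, μ[fun ω => A ω s t * v ω t | 𝒢] := by
  have hsum : (fun ω => (A ω *ᵥ v ω) s) = ∑ t, fun ω => A ω s t * v ω t := by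
    funext ω
    simp only [mulVec, dotProduct, Finset.sum_apply]
  rw [hsum]
  exact condExp_finsetSum (fun t _ => hint t) 𝒢

lemma integrable_mulVec_apply [Fintype κ] {A : Ω → Matrix ι κ ℝ} {v : Ω → κ → ℝ} (s : ι)
    (hint : ∀ t, Integrable (fun ω => A ω s t * v ω t) μ) :
    Integrable (fun ω => (A ω *ᵥ v ω) s) μ := by
  simpa only [mulVec, dotProduct] using integrable_finsetSum Finset.univ fun t _ => hint t

lemma condExp_mulVec_apply_of_stronglyMeasurable [Fintype κ] {A : Ω → Matrix ι κ ℝ}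
    {g : Ω → κ → ℝ} (s : ι) (hg : ∀ t, StronglyMeasurable[𝒢] fun ω => g ω t)
    (hA : ∀ t, Integrable (fun ω => A ω s t) μ)
    (hAg : ∀ t, Integrable (fun ω => A ω s t * g ω t) μ) :
    μ[fun ω => (A ω *ᵥ g ω) s | 𝒢] =ᵐ[μ] fun ω => (condExpMatrix μ 𝒢 A ω *ᵥ g ω) s := by
  have hpull : ∀ᵐ ω ∂μ, ∀ t,
      μ[fun ω' => A ω' s t * g ω' t | 𝒢] ω = condExpMatrix μ 𝒢 A ω s t * g ω t :=
    ae_all_iff.mpr fun t => condExp_mul_of_stronglyMeasurable_right (hg t) (hAg t) (hA t)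
  filter_upwards [condExp_mulVec_apply A g s hAg, hpull] with ω hsum hpull
  rw [hsum, Finset.sum_apply]
  exact Finset.sum_congr rfl fun t _ => hpull t

lemma condExp_mul_eq_zero_of_condExp_eq_zero {f u : Ω → ℝ} (h𝒢ℋ : 𝒢 ≤ ℋ) (hℋ : ℋ ≤ mΩ)
    [SigmaFinite (μ.trim hℋ)] (hf : StronglyMeasurable[ℋ] f) (hfu : Integrable (f * u) μ)
    (hu_int : Integrable u μ) (hu : μ[u | ℋ] =ᵐ[μ] 0) :
    μ[f * u | 𝒢] =ᵐ[μ] 0 := by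
  have hℋ_zero : μ[f * u | ℋ] =ᵐ[μ] 0 := by
    filter_upwards [condExp_mul_of_stronglyMeasurable_left hf hfu hu_int, hu] with ω h1 h2
    simp [h1, h2]
  calc μ[f * u | 𝒢] =ᵐ[μ] μ[μ[f * u | ℋ] | 𝒢] := (condExp_condExp_of_le h𝒢ℋ hℋ).symm
    _ =ᵐ[μ] μ[0 | 𝒢] := condExp_congr_ae hℋ_zero
    _ = 0 := condExp_zero

lemma condExp_mulVec_apply_eq_zero [Fintype κ] {A : Ω → Matrix ι κ ℝ} {u : Ω → κ → ℝ}
    (h𝒢ℋ : 𝒢 ≤ ℋ) (hℋ : ℋ ≤ mΩ) [SigmaFinite (μ.trim hℋ)] (s : ι)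
    (hA : ∀ t, StronglyMeasurable[ℋ] fun ω => A ω s t)
    (hAu : ∀ t, Integrable (fun ω => A ω s t * u ω t) μ)
    (hu_int : ∀ t, Integrable (fun ω => u ω t) μ)
    (hu : ∀ t, μ[fun ω => u ω t | ℋ] =ᵐ[μ] 0) :
    μ[fun ω => (A ω *ᵥ u ω) s | 𝒢] =ᵐ[μ] 0 := by
  have hzero : ∀ᵐ ω ∂μ, ∀ t, μ[fun ω' => A ω' s t * u ω' t | 𝒢] ω = 0 :=
    ae_all_iff.mpr fun t =>
      condExp_mul_eq_zero_of_condExp_eq_zero h𝒢ℋ hℋ (hA t) (hAu t) (hu_int t) (hu t)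
  filter_upwards [condExp_mulVec_apply A u s hAu, hzero] with ω hsum hzero
  rw [hsum, Finset.sum_apply, Pi.zero_apply]
  exact Finset.sum_eq_zero fun t _ => hzero t

end MeasureTheory

theorem identification_of_g_general
    {Ω : Type*} {mΩ : MeasurableSpace Ω} (μ : Measure Ω) [IsProbabilityMeasure μ]
    (𝒢 ℋ : MeasurableSpace Ω) (h𝒢ℋ : 𝒢 ≤ ℋ) (hℋ : ℋ ≤ mΩ)
    (m : ℕ)
    (M : Ω → Matrix (Fin m) (Fin m) ℝ)
    (hMmeas : ∀ s t, StronglyMeasurable[ℋ] fun ω => M ω s t)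
    (hMbdd : ∀ ω s t, |M ω s t| ≤ 1)
    (g : Ω → Fin m → ℝ) (hgmeas : ∀ s, StronglyMeasurable[𝒢] fun ω => g ω s)
    (hgint : Integrable g μ)
    (u : Ω → Fin m → ℝ) (huint : Integrable u μ)
    (hu : ∀ s, μ[(fun ω => u ω s) | ℋ] =ᵐ[μ] 0)
    (h : Ω → Fin m → ℝ) (hMh : ∀ᵐ ω ∂μ, M ω *ᵥ h ω = 0)
    (ydot : Ω → Fin m → ℝ) (hy : ∀ ω, ydot ω = h ω + g ω + u ω)
    (ℳ : Ω → Matrix (Fin m) (Fin m) ℝ)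
    (hℳ : ∀ s t, (fun ω => ℳ ω s t) = μ[(fun ω => M ω s t) | 𝒢]) :
    (∀ s, μ[(fun ω => (M ω *ᵥ ydot ω) s) | 𝒢] =ᵐ[μ] fun ω => (ℳ ω *ᵥ g ω) s)
      ∧ ((∀ᵐ ω ∂μ, IsUnit (ℳ ω)) →
          ∀ᵐ ω ∂μ,
            g ω = (ℳ ω)⁻¹ *ᵥ fun s => (μ[(fun ω' => (M ω' *ᵥ ydot ω') s) | 𝒢]) ω) := by
  have hℳ_eq : ℳ = condExpMatrix μ 𝒢 M :=
    funext fun ω => Matrix.ext fun s t => congrFun (hℳ s t) ω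
  have hM_bound : ∀ s t, ∀ᵐ ω ∂μ, ‖M ω s t‖ ≤ 1 := fun s t => ae_of_all _ fun ω => by
    simpa using hMbdd ω s t
  have hM_aesm : ∀ s t, AEStronglyMeasurable[mΩ] (fun ω => M ω s t) μ := fun s t =>
    ((hMmeas s t).mono hℋ).aestronglyMeasurable
  have hM_int : ∀ s t, Integrable (fun ω => M ω s t) μ := fun s t =>
    .of_bound (hM_aesm s t) 1 (hM_bound s t)
  have hMv_int : ∀ {v : Ω → Fin m → ℝ}, Integrable v μ → ∀ s t,
      Integrable (fun ω => M ω s t * v ω t) μ := fun hv s t =>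
    (hv.eval t).bdd_mul (hM_aesm s t) (hM_bound s t)
  have hMy : ∀ s, (fun ω => (M ω *ᵥ ydot ω) s) =ᵐ[μ]
      (fun ω => (M ω *ᵥ g ω) s) + fun ω => (M ω *ᵥ u ω) s := fun s => by
    filter_upwards [hMh] with ω hω
    simp [hy ω, mulVec_add, hω]
  have part_i : ∀ s, μ[(fun ω => (M ω *ᵥ ydot ω) s) | 𝒢] =ᵐ[μ] fun ω => (ℳ ω *ᵥ g ω) s :=
    fun s => calc
      _ =ᵐ[μ] μ[(fun ω => (M ω *ᵥ g ω) s) + fun ω => (M ω *ᵥ u ω) s | 𝒢] :=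
        condExp_congr_ae (hMy s)
      _ =ᵐ[μ] μ[fun ω => (M ω *ᵥ g ω) s | 𝒢] + μ[fun ω => (M ω *ᵥ u ω) s | 𝒢] :=
        condExp_add (integrable_mulVec_apply s (hMv_int hgint s))
          (integrable_mulVec_apply s (hMv_int huint s)) 𝒢
      _ =ᵐ[μ] (fun ω => (condExpMatrix μ 𝒢 M ω *ᵥ g ω) s) + 0 :=
        (condExp_mulVec_apply_of_stronglyMeasurable s hgmeas (hM_int s) (hMv_int hgint s)).add
          (condExp_mulVec_apply_eq_zero h𝒢ℋ hℋ s (hMmeas s) (hMv_int huint s)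
            (fun t => huint.eval t) hu)
      _ = _ := by rw [add_zero, hℳ_eq]
  refine ⟨part_i, fun hinv => ?_⟩
  filter_upwards [ae_all_iff.mpr part_i, hinv] with ω hω hU
  let _ := hU.invertible
  exact (inv_mulVec_eq_vec (funext hω)).symm

/-- Closed-form identification of the endogeneity-correction function `g`:
(i) `μ[M ·ᵥ ẏ | 𝒢] = ℳ ·ᵥ g` a.e., where `ℳ` is the entrywise conditional expectation of `M`;
(ii) if `ℳ(ω)` is a.e. invertible then `g = ℳ⁻¹ ·ᵥ μ[M ·ᵥ ẏ | 𝒢]` a.e. -/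
theorem identification_of_g
    {Ω : Type*} {mΩ : MeasurableSpace Ω} (μ : Measure Ω) [IsProbabilityMeasure μ]
    (𝒢 ℋ : MeasurableSpace Ω) (h𝒢ℋ : 𝒢 ≤ ℋ) (hℋ : ℋ ≤ mΩ)
    (m : ℕ) (hm : 0 < m)
    (M : Ω → Matrix (Fin m) (Fin m) ℝ)
    (hMmeas : ∀ s t, StronglyMeasurable[ℋ] fun ω => M ω s t)
    (hMbdd : ∀ ω s t, |M ω s t| ≤ 1)
    (g : Ω → Fin m → ℝ) (hgmeas : ∀ s, StronglyMeasurable[𝒢] fun ω => g ω s)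
    (hgint : Integrable g μ)
    (u : Ω → Fin m → ℝ) (huint : Integrable u μ)
    (hu : ∀ s, μ[(fun ω => u ω s) | ℋ] =ᵐ[μ] 0)
    (h : Ω → Fin m → ℝ) (hMh : ∀ᵐ ω ∂μ, M ω *ᵥ h ω = 0)
    (ydot : Ω → Fin m → ℝ) (hy : ∀ ω, ydot ω = h ω + g ω + u ω)
    (ℳ : Ω → Matrix (Fin m) (Fin m) ℝ)
    (hℳ : ∀ s t, (fun ω => ℳ ω s t) = μ[(fun ω => M ω s t) | 𝒢]) :
    (∀ s, μ[(fun ω => (M ω *ᵥ ydot ω) s) | 𝒢] =ᵐ[μ] fun ω => (ℳ ω *ᵥ g ω) s)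
      ∧ ((∀ᵐ ω ∂μ, IsUnit (ℳ ω)) →
          ∀ᵐ ω ∂μ,
            g ω = (ℳ ω)⁻¹ *ᵥ fun s => (μ[(fun ω' => (M ω' *ᵥ ydot ω') s) | 𝒢]) ω) :=
  identification_of_g_general μ 𝒢 ℋ h𝒢ℋ hℋ m M hMmeas hMbdd g hgmeas hgint u huint hu h hMh ydot hy
    ℳ hℳ
end

section
/- Let δ₀ > 0 and let A := {ω ∈ Ω : det(Ẋ(ω)ᵀ·Ẋ(ω)) > δ₀}, assumed to satisfy μ(A) > 0. If the product of the indicator of A with every entry of Q ·ᵥ u̇, of Q ·ᵥ g, and of μvec is integrable, then ∫_A μvec dμ = ∫ 1_A · (Q ·ᵥ ẏ − Q ·ᵥ g) dμ; consequently the conditional mean of μvec given A equals (∫ 1_A (Q ·ᵥ ẏ − Q ·ᵥ g) dμ) / μ(A). (Identification of the trimmed average partial effect E(μ | det(ẊᵀẊ) > δ₀).) -/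
/-!
On `A` the Gram matrix `ẊᵀẊ` is invertible, so `Q Ẋ = 1` and
`1_A (Q ẏ - Q g) = 1_A μvec + (1_A Q) u̇`. The matrix `1_A Q` is `ℋ`-measurable, so it can be
pulled out of the conditional expectation: `E[(1_A Q) u̇] = E[(1_A Q) E[u̇ | ℋ]] = 0`. The pull-out
property needs only the product `(1_A Q) u̇` to be integrable, so no truncation of `Q` is required.
-/

open MeasureTheory Matrix

lemma Set.indicator_eval {α ι : Type*} {β : ι → Type*} [∀ i, Zero (β i)] (s : Set α)
    (f : α → ∀ i, β i) (x : α) (i : ι) : s.indicator f x i = s.indicator (fun x => f x i) x := by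
  by_cases hx : x ∈ s <;> simp [hx]

lemma Matrix.mulVec_add_add_sub_of_mul_eq_one {R ι κ : Type*} [CommRing R] [Fintype ι]
    [Fintype κ] [DecidableEq κ] {Q : Matrix κ ι R} {X : Matrix ι κ R} (hQX : Q * X = 1)
    (b : κ → R) (g u : ι → R) : Q *ᵥ (X *ᵥ b + g + u) - Q *ᵥ g = b + Q *ᵥ u := by
  rw [mulVec_add, mulVec_add, mulVec_mulVec, hQX, one_mulVec]
  abel

lemma Matrix.inv_gram_mul_transpose_mul_self {K ι κ : Type*} [Field K] [Fintype ι] [Fintype κ]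
    [DecidableEq κ] {X : Matrix ι κ K} (h : (Xᵀ * X).det ≠ 0) : (Xᵀ * X)⁻¹ * Xᵀ * X = 1 := by
  rw [Matrix.mul_assoc]
  exact nonsing_inv_mul _ (isUnit_iff_ne_zero.2 h)

section MeasurableEntries

variable {Ω : Type*} {mΩ : MeasurableSpace Ω} {ι κ ν : Type*}

lemma measurable_matrix_det [Fintype ι] [DecidableEq ι] {M : Ω → Matrix ι ι ℝ}
    (hM : ∀ i j, Measurable fun ω => M ω i j) : Measurable fun ω => (M ω).det :=
  (continuous_id.matrix_det (X := ι → ι → ℝ)).measurable.comp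
    (measurable_pi_iff.2 fun i => measurable_pi_iff.2 (hM i))

lemma measurable_matrix_inv_apply [Fintype ι] [DecidableEq ι] {M : Ω → Matrix ι ι ℝ}
    (hM : ∀ i j, Measurable fun ω => M ω i j) (i j : ι) :
    Measurable fun ω => (M ω)⁻¹ i j := by
  have hadj : Measurable fun ω => (M ω).adjugate i j :=
    ((continuous_apply_apply i j).comp
      (continuous_id.matrix_adjugate (X := ι → ι → ℝ))).measurable.comp
        (measurable_pi_iff.2 fun i => measurable_pi_iff.2 (hM i))
  simp only [inv_def, Matrix.smul_apply, smul_eq_mul, Ring.inverse_eq_inv']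
  exact (measurable_matrix_det hM).inv.mul hadj

lemma measurable_matrix_mul_apply [Fintype κ] {M : Ω → Matrix ι κ ℝ} {N : Ω → Matrix κ ν ℝ}
    (hM : ∀ i j, Measurable fun ω => M ω i j) (hN : ∀ i j, Measurable fun ω => N ω i j)
    (i : ι) (k : ν) : Measurable fun ω => (M ω * N ω) i k := by
  simp only [mul_apply]
  exact Finset.measurable_sum _ fun j _ => (hM i j).mul (hN j k)

variable [Fintype ι] {X : Ω → Matrix ι κ ℝ}

lemma measurable_gram_apply (hX : ∀ i j, Measurable fun ω => X ω i j) (i k : κ) :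
    Measurable fun ω => ((X ω)ᵀ * X ω) i k :=
  measurable_matrix_mul_apply (fun i j => hX j i) hX i k

lemma measurable_inv_gram_mul_transpose_apply [Fintype κ] [DecidableEq κ]
    (hX : ∀ i j, Measurable fun ω => X ω i j)
    (k : κ) (i : ι) : Measurable fun ω => (((X ω)ᵀ * X ω)⁻¹ * (X ω)ᵀ) k i :=
  measurable_matrix_mul_apply (measurable_matrix_inv_apply (measurable_gram_apply hX))
    (fun i j => hX j i) k i

end MeasurableEntries

section ConditionalMeanZero

variable {Ω : Type*} {m mΩ : MeasurableSpace Ω} {μ : Measure Ω} {ι : Type*} [Fintype ι]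

lemma condExp_eq_zero_of_forall_eval {u : Ω → ι → ℝ} (hu : Integrable u μ)
    (h : ∀ i, μ[fun ω => u ω i | m] =ᵐ[μ] 0) : μ[u | m] =ᵐ[μ] 0 := by
  have hcomm i := (ContinuousLinearMap.proj (R := ℝ) (φ := fun _ : ι => ℝ) i).comp_condExp_comm
    (m := m) hu
  filter_upwards [ae_all_iff.2 fun i => (hcomm i).trans (h i)] with ω hω
  exact funext hω

noncomputable def dotProductCLM : (ι → ℝ) →L[ℝ] (ι → ℝ) →L[ℝ] ℝ :=
  LinearMap.toContinuousLinearMap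
    (LinearMap.toContinuousLinearMap.toLinearMap ∘ₗ dotProductBilin ℝ ℝ)

lemma integral_dotProduct_eq_zero_of_condExp_eq_zero_s2 (hm : m ≤ mΩ) [SigmaFinite (μ.trim hm)]
    {f u : Ω → ι → ℝ} (hf : StronglyMeasurable[m] f) (hu : Integrable u μ)
    (hu0 : μ[u | m] =ᵐ[μ] 0) (hfu : Integrable (fun ω => f ω ⬝ᵥ u ω) μ) :
    ∫ ω, f ω ⬝ᵥ u ω ∂μ = 0 := by
  change Integrable (fun ω => dotProductCLM (f ω) (u ω)) μ at hfu
  change ∫ ω, dotProductCLM (f ω) (u ω) ∂μ = 0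
  calc ∫ ω, dotProductCLM (f ω) (u ω) ∂μ
      = ∫ ω, μ[fun ω => dotProductCLM (f ω) (u ω) | m] ω ∂μ := (integral_condExp hm).symm
    _ = ∫ ω, dotProductCLM (f ω) (μ[u | m] ω) ∂μ :=
        integral_congr_ae (condExp_bilin_of_stronglyMeasurable_left _ hf hfu hu)
    _ = 0 := by
        rw [integral_congr_ae (hu0.mono fun ω hω => congrArg (dotProductCLM (f ω)) hω)]
        simp

lemma integral_mulVec_eq_zero_of_condExp_eq_zero {κ : Type*} [Fintype κ] (hm : m ≤ mΩ)
    [SigmaFinite (μ.trim hm)] {F : Ω → Matrix κ ι ℝ} {u : Ω → ι → ℝ}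
    (hF : ∀ k, Measurable[m] fun ω => F ω k) (hu : Integrable u μ) (hu0 : μ[u | m] =ᵐ[μ] 0)
    (hFu : ∀ k, Integrable (fun ω => (F ω *ᵥ u ω) k) μ) : ∫ ω, F ω *ᵥ u ω ∂μ = 0 := by
  funext k
  exact (eval_integral hFu k).trans <| integral_dotProduct_eq_zero_of_condExp_eq_zero_s2 hm
    (hF k).stronglyMeasurable hu hu0 (hFu k)

end ConditionalMeanZero

theorem trimmed_average_partial_effect_identification_general
    {Ω : Type*} {mΩ : MeasurableSpace Ω} (μ : Measure Ω) [IsProbabilityMeasure μ]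
    (ℋ : MeasurableSpace Ω) (hℋ : ℋ ≤ mΩ)
    (m d : ℕ)
    (Xdot : Ω → Matrix (Fin m) (Fin d) ℝ)
    (hXmeas : ∀ i j, StronglyMeasurable[ℋ] fun ω => Xdot ω i j)
    (Q : Ω → Matrix (Fin d) (Fin m) ℝ)
    (hQ : ∀ ω, Q ω = ((Xdot ω)ᵀ * Xdot ω)⁻¹ * (Xdot ω)ᵀ)
    (μvec : Ω → Fin d → ℝ)
    (g : Ω → Fin m → ℝ)
    (udot : Ω → Fin m → ℝ) (hu_int : Integrable udot μ)
    (hu_ce : ∀ i, μ[(fun ω => udot ω i) | ℋ] =ᵐ[μ] 0)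
    (ydot : Ω → Fin m → ℝ)
    (hy : ∀ ω, ydot ω = Xdot ω *ᵥ μvec ω + g ω + udot ω)
    (δ₀ : ℝ) (hδ₀ : 0 < δ₀)
    (A : Set Ω) (hA : A = {ω | δ₀ < ((Xdot ω)ᵀ * Xdot ω).det})
    (hQu : ∀ i, Integrable (A.indicator fun ω => (Q ω *ᵥ udot ω) i) μ)
    (hμvecA : ∀ i, Integrable (A.indicator fun ω => μvec ω i) μ) :
    (∫ ω in A, μvec ω ∂μ
        = ∫ ω, A.indicator (fun ω => Q ω *ᵥ ydot ω - Q ω *ᵥ g ω) ω ∂μ)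
      ∧ (⨍ ω in A, μvec ω ∂μ
          = (μ A).toReal⁻¹ •
              ∫ ω, A.indicator (fun ω => Q ω *ᵥ ydot ω - Q ω *ᵥ g ω) ω ∂μ) := by
  have hXm : ∀ i j, Measurable[ℋ] fun ω => Xdot ω i j := fun i j => (hXmeas i j).measurable
  have hAH : MeasurableSet[ℋ] A :=
    hA ▸ measurableSet_lt measurable_const (measurable_matrix_det (measurable_gram_apply hXm))
  have hQm : ∀ i, Measurable[ℋ] fun ω => A.indicator Q ω i := fun i =>
    measurable_pi_iff.2 fun j => by
      convert (measurable_inv_gram_mul_transpose_apply hXm i j).indicator hAH using 2 with ω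
      by_cases hω : ω ∈ A <;> simp [hω, hQ]
  have hdecomp : A.indicator (fun ω => Q ω *ᵥ ydot ω - Q ω *ᵥ g ω)
      = fun ω => A.indicator μvec ω + A.indicator Q ω *ᵥ udot ω := by
    funext ω
    by_cases hω : ω ∈ A
    · have hdet : δ₀ < ((Xdot ω)ᵀ * Xdot ω).det := by rwa [hA] at hω
      have hQX := hQ ω ▸ inv_gram_mul_transpose_mul_self (hδ₀.trans hdet).ne'
      simp only [Set.indicator_of_mem hω, hy, mulVec_add_add_sub_of_mul_eq_one hQX]
    · simp [hω]
  have hnoise_int : ∀ i, Integrable (fun ω => (A.indicator Q ω *ᵥ udot ω) i) μ := fun i =>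
    (hQu i).congr (ae_of_all _ fun ω => by by_cases hω : ω ∈ A <;> simp [hω])
  have hnoise : ∫ ω, A.indicator Q ω *ᵥ udot ω ∂μ = 0 :=
    integral_mulVec_eq_zero_of_condExp_eq_zero hℋ hQm hu_int
      (condExp_eq_zero_of_forall_eval hu_int hu_ce) hnoise_int
  have hμvec : Integrable (A.indicator μvec) μ :=
    Integrable.of_eval fun i => by simpa only [Set.indicator_eval] using hμvecA i
  have hident : ∫ ω, A.indicator (fun ω => Q ω *ᵥ ydot ω - Q ω *ᵥ g ω) ω ∂μ
      = ∫ ω in A, μvec ω ∂μ := by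
    rw [hdecomp, integral_add hμvec (Integrable.of_eval hnoise_int), hnoise, add_zero,
      integral_indicator (hℋ _ hAH)]
  exact ⟨hident.symm, by rw [setAverage_eq, hident]; rfl⟩

/-- Identification of the trimmed average partial effect `E(μ | det(ẊᵀẊ) > δ₀)`. -/
theorem trimmed_average_partial_effect_identification
    {Ω : Type*} {mΩ : MeasurableSpace Ω} (μ : Measure Ω) [IsProbabilityMeasure μ]
    (ℋ : MeasurableSpace Ω) (hℋ : ℋ ≤ mΩ)
    (m d : ℕ) (hd : 0 < d) (hdm : d < m)
    (Xdot : Ω → Matrix (Fin m) (Fin d) ℝ)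
    (hXmeas : ∀ i j, StronglyMeasurable[ℋ] fun ω => Xdot ω i j)
    (hXrank : ∀ᵐ ω ∂μ, (Xdot ω).rank = d)
    (Q : Ω → Matrix (Fin d) (Fin m) ℝ)
    (hQ : ∀ ω, Q ω = ((Xdot ω)ᵀ * Xdot ω)⁻¹ * (Xdot ω)ᵀ)
    (μvec : Ω → Fin d → ℝ)
    (g : Ω → Fin m → ℝ)
    (udot : Ω → Fin m → ℝ) (hu_int : Integrable udot μ)
    (hu_ce : ∀ i, μ[(fun ω => udot ω i) | ℋ] =ᵐ[μ] 0)
    (ydot : Ω → Fin m → ℝ)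
    (hy : ∀ ω, ydot ω = Xdot ω *ᵥ μvec ω + g ω + udot ω)
    (δ₀ : ℝ) (hδ₀ : 0 < δ₀)
    (A : Set Ω) (hA : A = {ω | δ₀ < ((Xdot ω)ᵀ * Xdot ω).det})
    (hAm : 0 < μ A)
    (hQu : ∀ i, Integrable (A.indicator fun ω => (Q ω *ᵥ udot ω) i) μ)
    (hQg : ∀ i, Integrable (A.indicator fun ω => (Q ω *ᵥ g ω) i) μ)
    (hμvecA : ∀ i, Integrable (A.indicator fun ω => μvec ω i) μ) :
    (∫ ω in A, μvec ω ∂μ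
        = ∫ ω, A.indicator (fun ω => Q ω *ᵥ ydot ω - Q ω *ᵥ g ω) ω ∂μ)
      ∧ (⨍ ω in A, μvec ω ∂μ
          = (μ A).toReal⁻¹ •
              ∫ ω, A.indicator (fun ω => Q ω *ᵥ ydot ω - Q ω *ᵥ g ω) ω ∂μ) :=
  trimmed_average_partial_effect_identification_general μ ℋ hℋ m d Xdot hXmeas Q hQ μvec g udot
    hu_int hu_ce ydot hy δ₀ hδ₀ A hA hQu hμvecA
end

section
/- Let additionally x₁ : Ω → ℝ^d be ℋ-strongly measurable, α : Ω → ℝ and ε₁ : Ω → ℝ be integrable with ∫ ε₁ dμ = 0, and define y₁ := x₁ ⬝ᵥ μvec + α + ε₁. If the real random variables x₁ ⬝ᵥ (Q ·ᵥ u̇), x₁ ⬝ᵥ (Q ·ᵥ g), and x₁ ⬝ᵥ (Q ·ᵥ ẏ) are integrable, then ∫ α dμ = ∫ (y₁ − x₁ ⬝ᵥ (Q ·ᵥ ẏ − Q ·ᵥ g)) dμ. (Identification of the mean E(α) of the additive individual effect.) -/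
open MeasureTheory Matrix Filter Set Topology

lemma integral_dot_eq_zero' {Ω : Type*} {mΩ : MeasurableSpace Ω} (μ : Measure Ω)
    [IsProbabilityMeasure μ]
    (ℋ : MeasurableSpace Ω) (hℋ : ℋ ≤ mΩ) {k : ℕ}
    (c u : Ω → Fin k → ℝ)
    (hc : ∀ j, Measurable[ℋ] fun ω => c ω j)
    (hu : ∀ j, Integrable (fun ω => u ω j) μ)
    (hce : ∀ j, μ[(fun ω => u ω j) | ℋ] =ᵐ[μ] 0)
    (hint : Integrable (fun ω => c ω ⬝ᵥ u ω) μ) :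
    ∫ ω, c ω ⬝ᵥ u ω ∂μ = 0 := by
  classical
  haveI : SigmaFinite (μ.trim hℋ) := inferInstance
  set f : Ω → ℝ := fun ω => c ω ⬝ᵥ u ω with hf
  set A : ℕ → Set Ω := fun n => {ω | ∀ j, |c ω j| ≤ n} with hAdef
  have hAmeas : ∀ n, MeasurableSet[ℋ] (A n) := by
    intro n
    have : A n = ⋂ j, {ω | |c ω j| ≤ n} := by ext ω; simp [hAdef]
    rw [this]
    exact MeasurableSet.iInter fun j =>
      measurableSet_le (hc j).abs measurable_const
  have hind_meas : ∀ n j, Measurable[ℋ] ((A n).indicator fun ω => c ω j) :=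
    fun n j => (hc j).indicator (hAmeas n)
  have hterm_int : ∀ n j,
      Integrable (fun ω => (A n).indicator (fun ω => c ω j) ω * u ω j) μ := by
    intro n j
    refine Integrable.mono ((hu j).const_mul n)
      ((((hind_meas n j).mono hℋ le_rfl).aestronglyMeasurable).mul (hu j).1) ?_
    refine Eventually.of_forall fun ω => ?_
    have hb : |(A n).indicator (fun ω => c ω j) ω| ≤ (n : ℝ) := by
      by_cases hω : ω ∈ A n
      · rw [Set.indicator_of_mem hω]; exact hω j
      · rw [Set.indicator_of_notMem hω]; simp
    simp only [Real.norm_eq_abs, abs_mul]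
    calc |(A n).indicator (fun ω => c ω j) ω| * |u ω j|
        ≤ (n : ℝ) * |u ω j| := by gcongr
      _ ≤ |(n : ℝ)| * |u ω j| := by gcongr; exact le_abs_self _
  have hFrep : ∀ n, (A n).indicator f
      = fun ω => ∑ j, (A n).indicator (fun ω => c ω j) ω * u ω j := by
    intro n
    funext ω
    by_cases hω : ω ∈ A n
    · simp [Set.indicator_of_mem hω, hf, dotProduct]
    · simp [Set.indicator_of_notMem hω]
  have hFzero : ∀ n, ∫ ω, (A n).indicator f ω ∂μ = 0 := by
    intro n
    rw [hFrep n]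
    rw [integral_finset_sum _ fun j _ => hterm_int n j]
    refine Finset.sum_eq_zero fun j _ => ?_
    set b : Ω → ℝ := (A n).indicator fun ω => c ω j with hbdef
    set w : Ω → ℝ := fun ω => u ω j with hwdef
    have hmul : μ[b * w | ℋ] =ᵐ[μ] b * μ[w | ℋ] :=
      condExp_mul_of_stronglyMeasurable_left (hind_meas n j).stronglyMeasurable
        (hterm_int n j) (hu j)
    have h0 : μ[b * w | ℋ] =ᵐ[μ] 0 := by
      refine hmul.trans ?_
      filter_upwards [hce j] with ω hω
      simp [hwdef ▸ hω]
    have hbw : ∫ ω, (b * w) ω ∂μ = 0 := by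
      rw [← integral_condExp hℋ, integral_congr_ae h0]; simp
    simpa [Pi.mul_apply] using hbw
  have htend : Tendsto (fun n => ∫ ω, (A n).indicator f ω ∂μ) atTop (𝓝 (∫ ω, f ω ∂μ)) := by
    refine tendsto_integral_of_dominated_convergence (fun ω => ‖f ω‖)
      (fun n => hint.1.indicator (hℋ _ (hAmeas n))) hint.norm
      (fun n => Eventually.of_forall fun ω => norm_indicator_le_norm_self f ω) ?_
    refine Eventually.of_forall fun ω => ?_
    refine tendsto_atTop_of_eventually_const (i₀ := ⌈∑ j, |c ω j|⌉₊) fun n hn => ?_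
    have hωA : ω ∈ A n := by
      intro j
      calc |c ω j| ≤ ∑ j', |c ω j'| :=
            Finset.single_le_sum (f := fun j' => |c ω j'|) (fun j' _ => abs_nonneg _) (Finset.mem_univ j)
        _ ≤ (⌈∑ j', |c ω j'|⌉₊ : ℝ) := Nat.le_ceil _
        _ ≤ (n : ℝ) := by exact_mod_cast hn
    exact Set.indicator_of_mem hωA f
  have : Tendsto (fun _ : ℕ => (0 : ℝ)) atTop (𝓝 (∫ ω, f ω ∂μ)) := by
    refine htend.congr fun n => ?_
    exact hFzero n
  exact (tendsto_nhds_unique tendsto_const_nhds this).symm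

/-- Identification of the mean `E(α)` of the additive individual effect. -/
theorem mean_additive_effect_identification
    {Ω : Type*} {mΩ : MeasurableSpace Ω} (μ : Measure Ω) [IsProbabilityMeasure μ]
    (ℋ : MeasurableSpace Ω) (hℋ : ℋ ≤ mΩ)
    (m d : ℕ) (hd : 0 < d) (hdm : d < m)
    (Xdot : Ω → Matrix (Fin m) (Fin d) ℝ)
    (hXmeas : ∀ i j, StronglyMeasurable[ℋ] fun ω => Xdot ω i j)
    (hXrank : ∀ᵐ ω ∂μ, (Xdot ω).rank = d)
    (Q : Ω → Matrix (Fin d) (Fin m) ℝ)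
    (hQ : ∀ ω, Q ω = ((Xdot ω)ᵀ * Xdot ω)⁻¹ * (Xdot ω)ᵀ)
    (μvec : Ω → Fin d → ℝ) (hμvec : Integrable μvec μ)
    (g : Ω → Fin m → ℝ)
    (udot : Ω → Fin m → ℝ) (hu_int : Integrable udot μ)
    (hu_ce : ∀ i, μ[(fun ω => udot ω i) | ℋ] =ᵐ[μ] 0)
    (ydot : Ω → Fin m → ℝ)
    (hy : ∀ ω, ydot ω = Xdot ω *ᵥ μvec ω + g ω + udot ω)
    (x₁ : Ω → Fin d → ℝ)
    (hx₁meas : ∀ i, StronglyMeasurable[ℋ] fun ω => x₁ ω i)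
    (α : Ω → ℝ) (hα : Integrable α μ)
    (ε₁ : Ω → ℝ) (hε₁ : Integrable ε₁ μ) (hε₁0 : ∫ ω, ε₁ ω ∂μ = 0)
    (y₁ : Ω → ℝ) (hy₁ : ∀ ω, y₁ ω = x₁ ω ⬝ᵥ μvec ω + α ω + ε₁ ω)
    (hxQu : Integrable (fun ω => x₁ ω ⬝ᵥ (Q ω *ᵥ udot ω)) μ)
    (hxQg : Integrable (fun ω => x₁ ω ⬝ᵥ (Q ω *ᵥ g ω)) μ)
    (hxQy : Integrable (fun ω => x₁ ω ⬝ᵥ (Q ω *ᵥ ydot ω)) μ) :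
    ∫ ω, α ω ∂μ
      = ∫ ω, (y₁ ω - x₁ ω ⬝ᵥ (Q ω *ᵥ ydot ω - Q ω *ᵥ g ω)) ∂μ := by
  classical
  -- measurability of the entries of Q
  have hXm : ∀ i j, Measurable[ℋ] fun ω => Xdot ω i j := fun i j => (hXmeas i j).measurable
  set M : Ω → Matrix (Fin d) (Fin d) ℝ := fun ω => (Xdot ω)ᵀ * Xdot ω with hMdef
  have hdetgen : ∀ (N : Ω → Matrix (Fin d) (Fin d) ℝ),
      (∀ i j, Measurable[ℋ] fun ω => N ω i j) → Measurable[ℋ] fun ω => (N ω).det := by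
    intro N hN
    have hrepr : (fun ω => (N ω).det)
        = fun ω => ∑ σ : Equiv.Perm (Fin d),
            ((Equiv.Perm.sign σ : ℤ) : ℝ) * ∏ i, N ω (σ i) i := by
      funext ω
      rw [Matrix.det_apply]
      simp [Units.smul_def, zsmul_eq_mul]
    rw [hrepr]
    exact Finset.measurable_sum _ fun σ _ =>
      (measurable_const.mul (Finset.measurable_prod _ fun i _ => hN (σ i) i))
  have hMent : ∀ i j, Measurable[ℋ] fun ω => M ω i j := by
    intro i j
    have : (fun ω => M ω i j) = fun ω => ∑ l, Xdot ω l i * Xdot ω l j := by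
      funext ω; simp [hMdef, Matrix.mul_apply, Matrix.transpose_apply]
    rw [this]
    exact Finset.measurable_sum _ fun l _ => (hXm l i).mul (hXm l j)
  have hdet : Measurable[ℋ] fun ω => (M ω).det := hdetgen M hMent
  have hadj : ∀ i l, Measurable[ℋ] fun ω => (M ω).adjugate i l := by
    intro i l
    have hrepr : (fun ω => (M ω).adjugate i l)
        = fun ω => ((M ω).updateRow l (Pi.single i 1)).det := by
      funext ω; rw [Matrix.adjugate_apply]
    rw [hrepr]
    refine hdetgen _ fun i' j' => ?_
    by_cases h : i' = l
    · subst h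
      simpa [Matrix.updateRow_apply] using (measurable_const : Measurable[ℋ] fun _ : Ω => Pi.single (f := fun _ : Fin d => ℝ) i 1 j')
    · simpa [Matrix.updateRow_apply, h] using hMent i' j'
  have hinv : ∀ i l, Measurable[ℋ] fun ω => (M ω)⁻¹ i l := by
    intro i l
    have : (fun ω => (M ω)⁻¹ i l) = fun ω => (M ω).det⁻¹ * (M ω).adjugate i l := by
      funext ω
      rw [Matrix.inv_def]
      simp [Ring.inverse_eq_inv', Matrix.smul_apply, smul_eq_mul]
    rw [this]
    exact hdet.inv.mul (hadj i l)
  have hQmeas : ∀ i j, Measurable[ℋ] fun ω => Q ω i j := by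
    intro i j
    have : (fun ω => Q ω i j) = fun ω => ∑ l, (M ω)⁻¹ i l * Xdot ω j l := by
      funext ω
      rw [hQ ω]
      simp [Matrix.mul_apply, Matrix.transpose_apply, hMdef]
    rw [this]
    exact Finset.measurable_sum _ fun l _ => (hinv i l).mul (hXm j l)
  -- a.e., Q ω * Xdot ω = 1
  have hQX1 : ∀ᵐ ω ∂μ, Q ω * Xdot ω = 1 := by
    filter_upwards [hXrank] with ω hω
    have hU : IsUnit (M ω) := by
      rw [← Matrix.mulVec_surjective_iff_isUnit]
      have hrank : (M ω).rank = d := by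
        rw [hMdef]; rw [Matrix.rank_transpose_mul_self, hω]
      have htop : LinearMap.range (M ω).mulVecLin = ⊤ := by
        apply Submodule.eq_top_of_finrank_eq
        rw [show Module.finrank ℝ ↥(LinearMap.range (M ω).mulVecLin) = (M ω).rank from rfl,
          hrank, Module.finrank_pi, Fintype.card_fin]
      intro v
      obtain ⟨w, hw⟩ := LinearMap.range_eq_top.mp htop v
      exact ⟨w, by simpa [Matrix.mulVecLin_apply] using hw⟩
    have hUdet : IsUnit (M ω).det := (Matrix.isUnit_iff_isUnit_det _).mp hU
    rw [hQ ω, Matrix.mul_assoc]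
    rw [show (Xdot ω)ᵀ * Xdot ω = M ω from rfl]
    exact Matrix.nonsing_inv_mul _ hUdet
  -- a.e. identity for the integrand
  have hae : (fun ω => y₁ ω - x₁ ω ⬝ᵥ (Q ω *ᵥ ydot ω - Q ω *ᵥ g ω))
      =ᵐ[μ] fun ω => α ω + ε₁ ω - x₁ ω ⬝ᵥ (Q ω *ᵥ udot ω) := by
    filter_upwards [hQX1] with ω h1
    have hQy : Q ω *ᵥ ydot ω - Q ω *ᵥ g ω = μvec ω + Q ω *ᵥ udot ω := by
      rw [hy ω, Matrix.mulVec_add, Matrix.mulVec_add, Matrix.mulVec_mulVec, h1,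
        Matrix.one_mulVec]
      abel
    rw [hy₁ ω, hQy, dotProduct_add]
    ring
  -- the integral of x₁ ⬝ᵥ (Q *ᵥ udot) vanishes
  have hdot0 : ∫ ω, x₁ ω ⬝ᵥ (Q ω *ᵥ udot ω) ∂μ = 0 := by
    have hrw : ∀ ω, x₁ ω ⬝ᵥ (Q ω *ᵥ udot ω) = (x₁ ω ᵥ* Q ω) ⬝ᵥ udot ω := fun ω =>
      Matrix.dotProduct_mulVec _ _ _
    have hc : ∀ j, Measurable[ℋ] fun ω => (x₁ ω ᵥ* Q ω) j := by
      intro j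
      have : (fun ω => (x₁ ω ᵥ* Q ω) j) = fun ω => ∑ i, x₁ ω i * Q ω i j := by
        funext ω; simp [Matrix.vecMul, dotProduct]
      rw [this]
      exact Finset.measurable_sum _ fun i _ => (hx₁meas i).measurable.mul (hQmeas i j)
    have hucoord : ∀ j, Integrable (fun ω => udot ω j) μ := by
      intro j
      refine hu_int.norm.mono ((continuous_apply j).comp_aestronglyMeasurable hu_int.1) ?_
      refine Filter.Eventually.of_forall fun ω => ?_
      simpa using (norm_le_pi_norm (udot ω) j).trans (le_abs_self _)
    have := integral_dot_eq_zero' μ ℋ hℋ (fun ω => x₁ ω ᵥ* Q ω) udot hc hucoord hu_ce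
      (by simpa [hrw] using hxQu)
    simpa [hrw] using this
  -- conclude
  have hint2 : Integrable (fun ω => α ω + ε₁ ω - x₁ ω ⬝ᵥ (Q ω *ᵥ udot ω)) μ :=
    (hα.add hε₁).sub hxQu
  have hsub := integral_sub (hα.add hε₁) hxQu
  simp only [Pi.add_apply] at hsub
  rw [integral_congr_ae hae, hsub, integral_add hα hε₁, hε₁0, hdot0]
  ring
end

section
/- For every vector c ∈ ℝ^m, (∫ M dμ) ·ᵥ c = 0 if and only if M(ω) ·ᵥ c = 0 for μ-almost every ω. Consequently, the matrix ℳ := ∫ M dμ is invertible if and only if the only vector c ∈ ℝ^m with M(ω) ·ᵥ c = 0 for μ-almost every ω is c = 0. -/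
/-!
For a symmetric idempotent `P` one has `c ⬝ᵥ P c = ‖P c‖²`. Hence `c ⬝ᵥ (∫ M) c = ∫ ‖M ω c‖²`,
which vanishes exactly when `M ω c = 0` almost everywhere. At basis vectors the same identity
gives `P j j = ∑ l, P l j ^ 2`, so the entries of `P` lie in `[-1, 1]` and `M` is integrable.
-/

open MeasureTheory Matrix

namespace Matrix

variable {n : Type*} [Fintype n]

theorem dotProduct_mulVec_eq_dotProduct_self_of_symm_idempotent {R : Type*} [CommSemiring R]
    {P : Matrix n n R} (hsym : Pᵀ = P) (hidem : P * P = P) (u : n → R) :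
    u ⬝ᵥ (P *ᵥ u) = (P *ᵥ u) ⬝ᵥ (P *ᵥ u) := by
  calc u ⬝ᵥ (P *ᵥ u) = u ⬝ᵥ (Pᵀ *ᵥ (P *ᵥ u)) := by rw [hsym, mulVec_mulVec, hidem]
    _ = (P *ᵥ u) ⬝ᵥ (P *ᵥ u) := by rw [dotProduct_mulVec, vecMul_transpose]

theorem abs_apply_le_one_of_symm_idempotent {P : Matrix n n ℝ}
    (hsym : Pᵀ = P) (hidem : P * P = P) (i j : n) : |P i j| ≤ 1 := by
  classical
  have hdiag : P j j = ∑ l, P l j ^ 2 := by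
    simpa [sq, dotProduct, Pi.single_apply] using
      dotProduct_mulVec_eq_dotProduct_self_of_symm_idempotent hsym hidem (Pi.single j 1)
  have hle : ∀ l, P l j ^ 2 ≤ P j j := fun l =>
    hdiag ▸ Finset.single_le_sum (fun l _ => sq_nonneg (P l j)) (Finset.mem_univ l)
  have hjj : P j j ≤ 1 := by nlinarith [hle j]
  exact abs_le_one_iff_mul_self_le_one.2 (by nlinarith [hle i])

theorem isUnit_iff_forall_mulVec_eq_zero {K : Type*} [Field K] [DecidableEq n]
    {A : Matrix n n K} : IsUnit A ↔ ∀ v, A *ᵥ v = 0 → v = 0 := by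
  rw [← mulVec_injective_iff_isUnit, ← ker_mulVecLin_eq_bot_iff, LinearMap.ker_eq_bot]
  rfl

end Matrix

section RandomMatrix

variable {Ω n : Type*} [Fintype n] {mΩ : MeasurableSpace Ω} {μ : Measure Ω}
  {f : Ω → Matrix n n ℝ}

theorem integrable_dotProduct_mulVec (hf : ∀ i j, Integrable (fun ω => f ω i j) μ)
    (u v : n → ℝ) : Integrable (fun ω => u ⬝ᵥ (f ω *ᵥ v)) μ := by
  simp only [dotProduct, mulVec, Finset.mul_sum]
  exact integrable_finsetSum _ fun i _ => integrable_finsetSum _ fun j _ =>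
    ((hf i j).mul_const _).const_mul _

theorem integral_dotProduct_mulVec (hf : ∀ i j, Integrable (fun ω => f ω i j) μ)
    {A : Matrix n n ℝ} (hA : ∀ i j, A i j = ∫ ω, f ω i j ∂μ) (u v : n → ℝ) :
    ∫ ω, u ⬝ᵥ (f ω *ᵥ v) ∂μ = u ⬝ᵥ (A *ᵥ v) := by
  simp only [dotProduct, mulVec, Finset.mul_sum, hA]
  rw [integral_finsetSum _ fun i _ => integrable_finsetSum _ fun j _ =>
    ((hf i j).mul_const _).const_mul _]
  refine Finset.sum_congr rfl fun i _ => ?_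
  rw [integral_finsetSum _ fun j _ => ((hf i j).mul_const _).const_mul _]
  simp only [integral_const_mul, integral_mul_const]

theorem integrable_apply_of_ae_symm_idempotent [IsFiniteMeasure μ]
    (hmeas : ∀ i j, AEStronglyMeasurable (fun ω => f ω i j) μ)
    (hsym : ∀ᵐ ω ∂μ, (f ω)ᵀ = f ω) (hidem : ∀ᵐ ω ∂μ, f ω * f ω = f ω) (i j : n) :
    Integrable (fun ω => f ω i j) μ := by
  refine Integrable.of_bound (hmeas i j) 1 ?_
  filter_upwards [hsym, hidem] with ω hs hi
  exact abs_apply_le_one_of_symm_idempotent hs hi i j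

theorem mulVec_eq_zero_iff_ae_mulVec_eq_zero_of_symm_idempotent
    (hf : ∀ i j, Integrable (fun ω => f ω i j) μ)
    (hsym : ∀ᵐ ω ∂μ, (f ω)ᵀ = f ω) (hidem : ∀ᵐ ω ∂μ, f ω * f ω = f ω)
    {A : Matrix n n ℝ} (hA : ∀ i j, A i j = ∫ ω, f ω i j ∂μ) (v : n → ℝ) :
    A *ᵥ v = 0 ↔ ∀ᵐ ω ∂μ, f ω *ᵥ v = 0 := by
  constructor
  · intro hv
    have hquad : (fun ω => v ⬝ᵥ (f ω *ᵥ v)) =ᵐ[μ] fun ω => (f ω *ᵥ v) ⬝ᵥ (f ω *ᵥ v) := by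
      filter_upwards [hsym, hidem] with ω hs hi
      exact dotProduct_mulVec_eq_dotProduct_self_of_symm_idempotent hs hi v
    have hzero : ∫ ω, (f ω *ᵥ v) ⬝ᵥ (f ω *ᵥ v) ∂μ = 0 := by
      rw [← integral_congr_ae hquad, integral_dotProduct_mulVec hf hA, hv, dotProduct_zero]
    have hae := (integral_eq_zero_iff_of_nonneg (fun ω => dotProduct_self_star_nonneg _)
      ((integrable_dotProduct_mulVec hf v v).congr hquad)).1 hzero
    filter_upwards [hae] with ω hω
    exact dotProduct_self_eq_zero.1 hω
  · intro hv
    have hzero : ∀ u, u ⬝ᵥ (A *ᵥ v) = 0 := fun u => by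
      rw [← integral_dotProduct_mulVec hf hA, integral_eq_zero_of_ae]
      filter_upwards [hv] with ω hω
      simp [hω]
    exact dotProduct_self_eq_zero.1 (hzero _)

end RandomMatrix

theorem integral_projection_kernel_and_invertibility_general
    {Ω : Type*} {mΩ : MeasurableSpace Ω} (μ : Measure Ω) [IsProbabilityMeasure μ]
    (m : ℕ)
    (M : Ω → Matrix (Fin m) (Fin m) ℝ)
    (hMmeas : ∀ i j, StronglyMeasurable fun ω => M ω i j)
    (hMsym : ∀ᵐ ω ∂μ, (M ω)ᵀ = M ω)
    (hMidem : ∀ᵐ ω ∂μ, M ω * M ω = M ω)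
    (ℳ : Matrix (Fin m) (Fin m) ℝ)
    (hℳ : ∀ i j, ℳ i j = ∫ ω, M ω i j ∂μ) :
    (∀ c : Fin m → ℝ, ℳ *ᵥ c = 0 ↔ ∀ᵐ ω ∂μ, M ω *ᵥ c = 0)
      ∧ (IsUnit ℳ ↔ ∀ c : Fin m → ℝ, (∀ᵐ ω ∂μ, M ω *ᵥ c = 0) → c = 0) := by
  have hint := integrable_apply_of_ae_symm_idempotent
    (fun i j => (hMmeas i j).aestronglyMeasurable) hMsym hMidem
  have hker := mulVec_eq_zero_iff_ae_mulVec_eq_zero_of_symm_idempotent hint hMsym hMidem hℳ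
  refine ⟨hker, ?_⟩
  simp only [isUnit_iff_forall_mulVec_eq_zero, hker]

/-- For a random symmetric idempotent matrix `M`, `(∫ M dμ) ·ᵥ c = 0` iff `M(ω) ·ᵥ c = 0`
for almost every `ω`; consequently `∫ M dμ` is invertible iff the only vector annihilated
by almost every `M(ω)` is `0`. -/
theorem integral_projection_kernel_and_invertibility
    {Ω : Type*} {mΩ : MeasurableSpace Ω} (μ : Measure Ω) [IsProbabilityMeasure μ]
    (m : ℕ) (hm : 0 < m)
    (M : Ω → Matrix (Fin m) (Fin m) ℝ)
    (hMmeas : ∀ i j, StronglyMeasurable fun ω => M ω i j)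
    (hMsym : ∀ᵐ ω ∂μ, (M ω)ᵀ = M ω)
    (hMidem : ∀ᵐ ω ∂μ, M ω * M ω = M ω)
    (ℳ : Matrix (Fin m) (Fin m) ℝ)
    (hℳ : ∀ i j, ℳ i j = ∫ ω, M ω i j ∂μ) :
    (∀ c : Fin m → ℝ, ℳ *ᵥ c = 0 ↔ ∀ᵐ ω ∂μ, M ω *ᵥ c = 0)
      ∧ (IsUnit ℳ ↔ ∀ c : Fin m → ℝ, (∀ᵐ ω ∂μ, M ω *ᵥ c = 0) → c = 0) :=
  integral_projection_kernel_and_invertibility_general (mΩ := mΩ) μ m M hMmeas hMsym hMidem ℳ hℳ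
end

section
/- Let m, d, N be positive integers with d < m, let Ẋ_1, …, Ẋ_N be m×d real matrices each of full column rank d, and let (e_1, …, e_m) be a basis of ℝ^m. If for every t ∈ {1, …, m} there exists an index j_t ∈ {1, …, N} with Ẋ_{j_t}ᵀ ·ᵥ e_t = 0, then N·(m − d) ≥ m. (Hence the conditional support of the discrete instrument must contain at least ⌈(T−1)/(T−1−d_x)⌉ points.) -/
/-!
By rank–nullity each kernel of `Ẋ_jᵀ` has dimension `m - d`. Every basis vector `e_t` lies in one
of these `N` kernels, so `ℝ^m` is their sum and `m ≤ N * (m - d)` by subadditivity of dimension.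
-/

open Matrix Module

theorem Submodule.finrank_finset_sup_le_sum {K V ι : Type*} [DivisionRing K] [AddCommGroup V]
    [Module K V] [FiniteDimensional K V] (s : Finset ι) (W : ι → Submodule K V) :
    finrank K (s.sup W : Submodule K V) ≤ ∑ i ∈ s, finrank K (W i) := by
  classical
  induction s using Finset.induction_on with
  | empty => simp
  | insert a s ha ih =>
    rw [Finset.sup_insert, Finset.sum_insert ha]
    exact (Submodule.finrank_add_le_finrank_add_finrank _ _).trans (by omega)

theorem finrank_le_sum_finrank_of_basis_mem {K V ι κ : Type*} [DivisionRing K] [AddCommGroup V]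
    [Module K V] [FiniteDimensional K V] [Fintype κ] (b : Basis ι K V) (W : κ → Submodule K V)
    (hb : ∀ i, ∃ j, b i ∈ W j) :
    finrank K V ≤ ∑ j, finrank K (W j) := by
  have hsup : (⊤ : Submodule K V) ≤ Finset.univ.sup W := by
    rw [← b.span_eq, Submodule.span_le]
    rintro _ ⟨i, rfl⟩
    obtain ⟨j, hj⟩ := hb i
    exact Finset.le_sup (f := W) (Finset.mem_univ j) hj
  calc finrank K V = finrank K (⊤ : Submodule K V) := finrank_top K V |>.symm
    _ ≤ finrank K (Finset.univ.sup W : Submodule K V) := Submodule.finrank_mono hsup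
    _ ≤ ∑ j, finrank K (W j) := Submodule.finrank_finset_sup_le_sum _ _

theorem Matrix.finrank_ker_mulVecLin_transpose {K m n : Type*} [Field K] [Fintype m] [Fintype n]
    (A : Matrix m n K) :
    finrank K (LinearMap.ker Aᵀ.mulVecLin) = Fintype.card m - A.rank := by
  have := LinearMap.finrank_range_add_finrank_ker Aᵀ.mulVecLin
  rw [finrank_fintype_fun_eq_card, ← Matrix.rank, rank_transpose] at this
  omega

theorem support_point_count_bound_general
    (m d N : ℕ)
    (Xdot : Fin N → Matrix (Fin m) (Fin d) ℝ)
    (hrank : ∀ j, (Xdot j).rank = d)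
    (e : Module.Basis (Fin m) ℝ (Fin m → ℝ))
    (he : ∀ t : Fin m, ∃ j : Fin N, (Xdot j)ᵀ *ᵥ e t = 0) :
    m ≤ N * (m - d) := by
  have hker (j : Fin N) : finrank ℝ (LinearMap.ker (Xdot j)ᵀ.mulVecLin) = m - d := by
    rw [finrank_ker_mulVecLin_transpose, hrank j, Fintype.card_fin]
  calc m = finrank ℝ (Fin m → ℝ) := (finrank_fin_fun ℝ).symm
    _ ≤ ∑ j, finrank ℝ (LinearMap.ker (Xdot j)ᵀ.mulVecLin) :=
      finrank_le_sum_finrank_of_basis_mem e _ he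
    _ = N * (m - d) := by simp [hker]

/-- Counting bound: if a basis `(e_t)` of `ℝ^m` is such that each `e_t` is orthogonal to
all columns of some full-column-rank `m × d` matrix `Ẋ_{j_t}` out of `N` given matrices,
then `N·(m − d) ≥ m`. -/
theorem support_point_count_bound
    (m d N : ℕ) (hd : 0 < d) (hdm : d < m) (hN : 0 < N)
    (Xdot : Fin N → Matrix (Fin m) (Fin d) ℝ)
    (hrank : ∀ j, (Xdot j).rank = d)
    (e : Module.Basis (Fin m) ℝ (Fin m → ℝ))
    (he : ∀ t : Fin m, ∃ j : Fin N, (Xdot j)ᵀ *ᵥ e t = 0) :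
    m ≤ N * (m - d) :=
  support_point_count_bound_general m d N Xdot hrank e he
end

section
/- There exists λ ∈ ℝ with C₂(η) = λ·C₁ if and only if all the components of η are equal (η₂ = η₃ = ⋯ = η_T); in that case the common value of the components equals λ·(ρ − 1). In particular, C₂(η) = 0 if and only if η = 0. (Core algebraic step in the identification of the model with sequentially exogenous AR(1) regressors.) -/
/-- Core algebraic step in the identification of the model with sequentially exogenous
AR(1) regressors: with `(C₁)_t = (ρ−1)ρ^{t−1}` and
`(C₂(η))_t = (ρ−1)·Σ_{s=2}^t ρ^{t−s} η_s + η_{t+1}` (vectors indexed `t = 1, …, T−1`,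
written here with 0-based indices), `C₂(η)` is a multiple `λ·C₁` of `C₁` iff all the
components of `η` coincide, in which case their common value is `λ·(ρ−1)`; in particular
`C₂(η) = 0` iff `η = 0`. -/
theorem ar1_collinearity_characterization
    (T : ℕ) (hT : 3 ≤ T) (ρ : ℝ) (hρ : ρ ≠ 1)
    (C₁ : Fin (T - 1) → ℝ) (hC₁ : ∀ t : Fin (T - 1), C₁ t = (ρ - 1) * ρ ^ (t : ℕ))
    (η : Fin (T - 1) → ℝ)
    (C₂ : Fin (T - 1) → ℝ)
    (hC₂ : ∀ t : Fin (T - 1), C₂ t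
      = (ρ - 1) * (∑ s ∈ Finset.univ.filter (fun s : Fin (T - 1) => (s : ℕ) < (t : ℕ)),
          ρ ^ ((t : ℕ) - 1 - (s : ℕ)) * η s) + η t) :
    ((∃ lam : ℝ, C₂ = lam • C₁) ↔ ∀ i j, η i = η j)
      ∧ (∀ lam : ℝ, C₂ = lam • C₁ → ∀ i, η i = lam * (ρ - 1))
      ∧ (C₂ = 0 ↔ η = 0) := by
  have hρ' : ρ - 1 ≠ 0 := sub_ne_zero.mpr hρ
  have hpos : 0 < T - 1 := by omega
  -- a generic filtered-sum computation when all η-values in sight equal a constant c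
  have hsum : ∀ (c : ℝ) (t : Fin (T - 1)),
      (∀ s : Fin (T - 1), (s : ℕ) < (t : ℕ) → η s = c) →
      (∑ s ∈ Finset.univ.filter (fun s : Fin (T - 1) => (s : ℕ) < (t : ℕ)),
          ρ ^ ((t : ℕ) - 1 - (s : ℕ)) * η s)
        = (∑ k ∈ Finset.range (t : ℕ), ρ ^ k) * c := by
    intro c t hall
    have step1 : (∑ s ∈ Finset.univ.filter (fun s : Fin (T - 1) => (s : ℕ) < (t : ℕ)),
        ρ ^ ((t : ℕ) - 1 - (s : ℕ)) * η s)
        = ∑ s ∈ Finset.univ.filter (fun s : Fin (T - 1) => (s : ℕ) < (t : ℕ)),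
            ρ ^ ((t : ℕ) - 1 - (s : ℕ)) * c := by
      refine Finset.sum_congr rfl ?_
      intro s hs
      simp only [Finset.mem_filter] at hs
      rw [hall s hs.2]
    have step2 : (∑ s ∈ Finset.univ.filter (fun s : Fin (T - 1) => (s : ℕ) < (t : ℕ)),
        ρ ^ ((t : ℕ) - 1 - (s : ℕ)) * c)
        = ∑ k ∈ Finset.range (t : ℕ), ρ ^ ((t : ℕ) - 1 - k) * c := by
      rw [Finset.sum_filter, Fin.sum_univ_eq_sum_range
        (fun k => if k < (t : ℕ) then ρ ^ ((t : ℕ) - 1 - k) * c else 0), ← Finset.sum_filter]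
      congr 1
      ext k
      simp only [Finset.mem_filter, Finset.mem_range]
      constructor
      · rintro ⟨-, hk⟩; exact hk
      · intro hk; exact ⟨lt_of_lt_of_le hk (by omega : (t : ℕ) ≤ T - 1), hk⟩
    rw [step1, step2, ← Finset.sum_mul]
    congr 1
    exact Finset.sum_range_reflect (fun k => ρ ^ k) (t : ℕ)
  have hgeom : ∀ n : ℕ, (∑ k ∈ Finset.range n, ρ ^ k) * (ρ - 1) = ρ ^ n - 1 :=
    fun n => geom_sum_mul ρ n
  -- forward direction: collinearity forces all η equal to lam*(ρ-1)
  have forward : ∀ lam : ℝ, C₂ = lam • C₁ → ∀ i, η i = lam * (ρ - 1) := by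
    intro lam hlam
    have h : ∀ t : Fin (T - 1), C₂ t = lam * ((ρ - 1) * ρ ^ (t : ℕ)) := by
      intro t
      rw [hlam]
      simp [hC₁ t]
    have key : ∀ n : ℕ, ∀ i : Fin (T - 1), (i : ℕ) = n → η i = lam * (ρ - 1) := by
      intro n
      induction n using Nat.strong_induction_on with
      | _ n ih =>
        intro i hin
        have h2 := h i
        rw [hC₂ i] at h2
        have hs := hsum (lam * (ρ - 1)) i (fun s hsi => ih (s : ℕ) (by omega) s rfl)
        rw [hs] at h2
        have hg := hgeom (i : ℕ)
        linear_combination h2 - lam * (ρ - 1) * hg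
    intro i
    exact key (i : ℕ) i rfl
  -- backward direction: all η equal gives collinearity
  have backward : (∀ i j, η i = η j) → ∃ lam : ℝ, C₂ = lam • C₁ := by
    intro hall
    set c : ℝ := η ⟨0, hpos⟩ with hc
    refine ⟨c / (ρ - 1), ?_⟩
    funext t
    have hlc : c / (ρ - 1) * (ρ - 1) = c := div_mul_cancel₀ c hρ'
    rw [hC₂ t, Pi.smul_apply, smul_eq_mul, hC₁ t]
    rw [hsum c t (fun s _ => hall s ⟨0, hpos⟩)]
    have hg := hgeom (t : ℕ)
    have heq : η t = c := hall t ⟨0, hpos⟩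
    rw [heq]
    have hrw : c / (ρ - 1) * ((ρ - 1) * ρ ^ (t : ℕ)) = c * ρ ^ (t : ℕ) := by
      field_simp
    rw [hrw]
    linear_combination c * hg
  refine ⟨⟨fun ⟨lam, hlam⟩ i j => by rw [forward lam hlam i, forward lam hlam j], ?_⟩,
    forward, ?_, ?_⟩
  · intro hall
    exact backward hall
  · intro h0
    have : C₂ = (0 : ℝ) • C₁ := by rw [h0]; simp
    funext i
    have := forward 0 this i
    simpa using this
  · intro h0
    funext t
    rw [hC₂ t]
    simp [h0]
end

section
/- Then M ·ᵥ Δẏ = (M·ΔL̇) ·ᵥ b + M ·ᵥ u̇ holds μ-almost everywhere, and consequently b = B⁻¹ · ∫ Żᵀ ·ᵥ (M ·ᵥ Δẏ) dμ. (Robinson-type identification of the homogeneous coefficient b in the model combining random coefficients with common parameters.) -/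
open MeasureTheory Matrix

/-!
Conditioning `M ·ᵥ ẏ` on `𝒢` leaves `ML·b + ℳ·g`: the `L̇·b` and `g` parts come out of the
conditional expectation (`b` is constant, `g` is `𝒢`-measurable), `M·h` vanishes, and `M·u̇`
has zero conditional mean already given `ℋ ⊇ 𝒢`, because `M` is `ℋ`-measurable. Subtracting
`ℳ⁻¹` of this from `ẏ` removes `g` and `h` after multiplication by `M`, which is the first
claim. Multiplying it by the `ℋ`-measurable instrument `Żᵀ` and integrating kills the error
term `ŻᵀM·u̇` by the same pull-out argument, leaving the moment equation `∫ ŻᵀM·Δẏ = B·b`.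
-/

section ConditionalExpectation

variable {Ω ι κ : Type*} [Fintype κ] {m mΩ : MeasurableSpace Ω} {μ : Measure Ω}

theorem integrable_mulVec_apply {A : Ω → Matrix ι κ ℝ} {v : Ω → κ → ℝ}
    (hAv : ∀ s t, Integrable (fun ω => A ω s t * v ω t) μ) (s : ι) :
    Integrable (fun ω => (A ω *ᵥ v ω) s) μ :=
  integrable_finsetSum _ fun t _ => hAv s t

theorem condExp_sum_mul_of_stronglyMeasurable_left {f g : κ → Ω → ℝ}
    (hf : ∀ i, StronglyMeasurable[m] (f i)) (hfg : ∀ i, Integrable (f i * g i) μ)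
    (hg : ∀ i, Integrable (g i) μ) :
    μ[fun ω => ∑ i, f i ω * g i ω | m] =ᵐ[μ] fun ω => ∑ i, f i ω * μ[g i | m] ω := by
  have hsum : (fun ω => ∑ i, f i ω * g i ω) = ∑ i, f i * g i := by ext ω; simp
  rw [hsum]
  filter_upwards [condExp_finsetSum (s := Finset.univ) (fun i _ => hfg i) m,
    ae_all_iff.2 fun i => condExp_mul_of_stronglyMeasurable_left (m := m) (hf i) (hfg i) (hg i)]
    with ω hsum_ω hpull_ω
  rw [hsum_ω, Finset.sum_apply]
  exact Finset.sum_congr rfl fun i _ => hpull_ω i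

theorem condExp_mulVec_of_stronglyMeasurable {A Ā : Ω → Matrix ι κ ℝ} {v : Ω → κ → ℝ}
    (hĀ : ∀ s t, (fun ω => Ā ω s t) = μ[fun ω => A ω s t | m])
    (hv : ∀ t, StronglyMeasurable[m] fun ω => v ω t)
    (hA : ∀ s t, Integrable (fun ω => A ω s t) μ)
    (hAv : ∀ s t, Integrable (fun ω => A ω s t * v ω t) μ) (s : ι) :
    μ[fun ω => (A ω *ᵥ v ω) s | m] =ᵐ[μ] fun ω => (Ā ω *ᵥ v ω) s := by
  have hvA : ∀ t, Integrable ((fun ω => v ω t) * fun ω => A ω s t) μ := fun t =>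
    (hAv s t).congr (ae_of_all _ fun ω => mul_comm _ _)
  have key := condExp_sum_mul_of_stronglyMeasurable_left hv hvA fun t => hA s t
  simp only [← hĀ] at key
  simpa [mulVec, dotProduct, mul_comm] using key

theorem condExp_mulVec_eq_zero {A : Ω → Matrix ι κ ℝ} {u : Ω → κ → ℝ}
    (hA : ∀ s t, StronglyMeasurable[m] fun ω => A ω s t)
    (hAu : ∀ s t, Integrable (fun ω => A ω s t * u ω t) μ)
    (hu : ∀ t, Integrable (fun ω => u ω t) μ) (hu0 : ∀ t, μ[fun ω => u ω t | m] =ᵐ[μ] 0)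
    (s : ι) :
    μ[fun ω => (A ω *ᵥ u ω) s | m] =ᵐ[μ] 0 := by
  filter_upwards [condExp_sum_mul_of_stronglyMeasurable_left (hA s) (hAu s) hu,
    ae_all_iff.2 hu0] with ω hω hu0_ω
  simpa [mulVec, dotProduct, hu0_ω] using hω

theorem integral_mulVec_eq_zero (hm : m ≤ mΩ) [SigmaFinite (μ.trim hm)]
    {A : Ω → Matrix ι κ ℝ} {u : Ω → κ → ℝ}
    (hA : ∀ s t, StronglyMeasurable[m] fun ω => A ω s t)
    (hAu : ∀ s t, Integrable (fun ω => A ω s t * u ω t) μ)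
    (hu : ∀ t, Integrable (fun ω => u ω t) μ) (hu0 : ∀ t, μ[fun ω => u ω t | m] =ᵐ[μ] 0)
    (s : ι) :
    ∫ ω, (A ω *ᵥ u ω) s ∂μ = 0 := by
  rw [← integral_condExp hm]
  exact integral_eq_zero_of_ae (condExp_mulVec_eq_zero hA hAu hu hu0 s)

theorem integral_mulVec_const {A : Ω → Matrix ι κ ℝ} {B : Matrix ι κ ℝ}
    (hA : ∀ s t, Integrable (fun ω => A ω s t) μ) (hB : ∀ s t, B s t = ∫ ω, A ω s t ∂μ)
    (c : κ → ℝ) (s : ι) :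
    ∫ ω, (A ω *ᵥ c) s ∂μ = (B *ᵥ c) s := by
  simp only [mulVec, dotProduct, hB]
  rw [integral_finsetSum _ fun t _ => (hA s t).mul_const _]
  simp [integral_mul_const]

theorem integral_mulVec_mulVec_eq_mulVec [Fintype ι] {ν : Type*} (hm : m ≤ mΩ)
    [SigmaFinite (μ.trim hm)] {W : Ω → Matrix ν ι ℝ} {P : Ω → Matrix ι ι ℝ}
    {X : Ω → Matrix ι κ ℝ} {y u : Ω → ι → ℝ} {B : Matrix ν κ ℝ} {c : κ → ℝ}
    (hmodel : ∀ᵐ ω ∂μ, P ω *ᵥ y ω = (P ω * X ω) *ᵥ c + P ω *ᵥ u ω)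
    (hW : ∀ i s, StronglyMeasurable[m] fun ω => W ω i s)
    (hP : ∀ s t, StronglyMeasurable[m] fun ω => P ω s t)
    (hWPX : ∀ i j, Integrable (fun ω => (W ω * P ω * X ω) i j) μ)
    (hB : ∀ i j, B i j = ∫ ω, (W ω * P ω * X ω) i j ∂μ)
    (hWPu : ∀ i t, Integrable (fun ω => (W ω * P ω) i t * u ω t) μ)
    (hu : ∀ t, Integrable (fun ω => u ω t) μ) (hu0 : ∀ t, μ[fun ω => u ω t | m] =ᵐ[μ] 0) :
    (fun i => ∫ ω, (W ω *ᵥ (P ω *ᵥ y ω)) i ∂μ) = B *ᵥ c := by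
  have hWP : ∀ i t, StronglyMeasurable[m] fun ω => (W ω * P ω) i t := fun i t => by
    simp only [mul_apply]
    exact Finset.stronglyMeasurable_fun_sum _ fun s _ => (hW i s).mul (hP s t)
  funext i
  calc ∫ ω, (W ω *ᵥ (P ω *ᵥ y ω)) i ∂μ
      = ∫ ω, ((W ω * P ω * X ω) *ᵥ c) i + ((W ω * P ω) *ᵥ u ω) i ∂μ := by
        refine integral_congr_ae ?_
        filter_upwards [hmodel] with ω hω
        simp only [← mulVec_mulVec, hω, mulVec_add, Matrix.mul_assoc, Pi.add_apply]
    _ = ∫ ω, ((W ω * P ω * X ω) *ᵥ c) i ∂μ + ∫ ω, ((W ω * P ω) *ᵥ u ω) i ∂μ :=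
        integral_add
          (integrable_mulVec_apply (v := fun _ => c) (fun i j => (hWPX i j).mul_const _) i)
          (integrable_mulVec_apply hWPu i)
    _ = (B *ᵥ c) i := by
        rw [integral_mulVec_const hWPX hB, integral_mulVec_eq_zero hm hWP hWPu hu hu0, add_zero]

theorem condExp_mulVec_mulVec_add_add [Fintype ι] {𝒢 ℋ : MeasurableSpace Ω} (h𝒢ℋ : 𝒢 ≤ ℋ)
    (hℋ : ℋ ≤ mΩ) [SigmaFinite (μ.trim hℋ)] {M ℳ : Ω → Matrix ι ι ℝ} {L ML : Ω → Matrix ι κ ℝ}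
    {g u : Ω → ι → ℝ} (c : κ → ℝ)
    (hℳ : ∀ s t, (fun ω => ℳ ω s t) = μ[fun ω => M ω s t | 𝒢])
    (hML : ∀ s j, (fun ω => ML ω s j) = μ[fun ω => (M ω * L ω) s j | 𝒢])
    (hM : ∀ s t, StronglyMeasurable[ℋ] fun ω => M ω s t)
    (hMint : ∀ s t, Integrable (fun ω => M ω s t) μ)
    (hMLint : ∀ s j, Integrable (fun ω => (M ω * L ω) s j) μ)
    (hg : ∀ t, StronglyMeasurable[𝒢] fun ω => g ω t)
    (hMg : ∀ s t, Integrable (fun ω => M ω s t * g ω t) μ)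
    (hu : ∀ t, Integrable (fun ω => u ω t) μ)
    (hMu : ∀ s t, Integrable (fun ω => M ω s t * u ω t) μ)
    (hu0 : ∀ t, μ[fun ω => u ω t | ℋ] =ᵐ[μ] 0) (s : ι) :
    μ[fun ω => (M ω *ᵥ (L ω *ᵥ c + g ω + u ω)) s | 𝒢]
      =ᵐ[μ] fun ω => (ML ω *ᵥ c + ℳ ω *ᵥ g ω) s := by
  have hMLc_int := integrable_mulVec_apply (v := fun _ => c) (fun s j => (hMLint s j).mul_const _) s
  have hMLc := condExp_mulVec_of_stronglyMeasurable (v := fun _ => c) hML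
    (fun _ => stronglyMeasurable_const) hMLint (fun s j => (hMLint s j).mul_const _) s
  have hℳg := condExp_mulVec_of_stronglyMeasurable hℳ hg hMint hMg s
  have hMu_zero : μ[fun ω => (M ω *ᵥ u ω) s | 𝒢] =ᵐ[μ] 0 :=
    ((condExp_condExp_of_le h𝒢ℋ hℋ).symm.trans
      (condExp_congr_ae (condExp_mulVec_eq_zero hM hMu hu hu0 s))).trans (by rw [condExp_zero])
  have hsplit : (fun ω => (M ω *ᵥ (L ω *ᵥ c + g ω + u ω)) s) = (fun ω => ((M ω * L ω) *ᵥ c) s)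
      + (fun ω => (M ω *ᵥ g ω) s) + fun ω => (M ω *ᵥ u ω) s := by
    ext ω; simp [mulVec_add, mulVec_mulVec]
  rw [hsplit]
  filter_upwards [condExp_add (hMLc_int.add (integrable_mulVec_apply hMg s))
      (integrable_mulVec_apply hMu s) 𝒢,
    condExp_add hMLc_int (integrable_mulVec_apply hMg s) 𝒢, hMLc, hℳg, hMu_zero]
    with ω h₁ h₂ h₃ h₄ h₅
  simp [h₁, h₂, h₃, h₄, h₅]

end ConditionalExpectation

theorem mulVec_sub_nonsing_inv_mulVec_eq {n p R : Type*} [Fintype n] [DecidableEq n] [Fintype p]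
    [CommRing R] {M ℳ : Matrix n n R} (hℳ : IsUnit ℳ) (L A : Matrix n p R) (c : p → R)
    (g h u : n → R) (hMh : M *ᵥ h = 0) :
    M *ᵥ (L *ᵥ c + g + h + u - ℳ⁻¹ *ᵥ (A *ᵥ c + ℳ *ᵥ g)) = (M * (L - ℳ⁻¹ * A)) *ᵥ c + M *ᵥ u := by
  have hinv : ℳ⁻¹ * ℳ = 1 := nonsing_inv_mul _ ((isUnit_iff_isUnit_det _).1 hℳ)
  simp only [mulVec_sub, mulVec_add, mulVec_mulVec, Matrix.mul_sub, sub_mulVec, hinv,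
    one_mulVec, hMh]
  abel

theorem homogeneous_coefficient_identification_general
    {Ω : Type*} {mΩ : MeasurableSpace Ω} (μ : Measure Ω) [IsProbabilityMeasure μ]
    (𝒢 ℋ : MeasurableSpace Ω) (h𝒢ℋ : 𝒢 ≤ ℋ) (hℋ : ℋ ≤ mΩ)
    (m q : ℕ)
    (M : Ω → Matrix (Fin m) (Fin m) ℝ)
    (hMmeas : ∀ s t, StronglyMeasurable[ℋ] fun ω => M ω s t)
    (hMbdd : ∀ ω s t, |M ω s t| ≤ 1)
    (Ldot Z : Ω → Matrix (Fin m) (Fin q) ℝ)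
    (hLint : ∀ s j, Integrable (fun ω => Ldot ω s j) μ)
    (hZmeas : ∀ s j, StronglyMeasurable[ℋ] fun ω => Z ω s j)
    (g : Ω → Fin m → ℝ) (hgmeas : ∀ s, StronglyMeasurable[𝒢] fun ω => g ω s)
    (hgint : Integrable g μ)
    (udot : Ω → Fin m → ℝ) (huint : Integrable udot μ)
    (hu : ∀ s, μ[(fun ω => udot ω s) | ℋ] =ᵐ[μ] 0)
    (h : Ω → Fin m → ℝ) (hMh : ∀ᵐ ω ∂μ, M ω *ᵥ h ω = 0)
    (b : Fin q → ℝ)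
    (ydot : Ω → Fin m → ℝ) (hy : ∀ ω, ydot ω = Ldot ω *ᵥ b + g ω + h ω + udot ω)
    (ℳ : Ω → Matrix (Fin m) (Fin m) ℝ)
    (hℳ : ∀ s t, (fun ω => ℳ ω s t) = μ[(fun ω => M ω s t) | 𝒢])
    (hℳinv : ∀ᵐ ω ∂μ, IsUnit (ℳ ω))
    (ML : Ω → Matrix (Fin m) (Fin q) ℝ)
    (hML : ∀ s j, (fun ω => ML ω s j) = μ[(fun ω => (M ω * Ldot ω) s j) | 𝒢])
    (k : Ω → Fin m → ℝ)
    (hk : ∀ s, (fun ω => k ω s) = μ[(fun ω => (M ω *ᵥ ydot ω) s) | 𝒢])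
    (Δydot : Ω → Fin m → ℝ) (hΔy : ∀ ω, Δydot ω = ydot ω - (ℳ ω)⁻¹ *ᵥ k ω)
    (ΔLdot : Ω → Matrix (Fin m) (Fin q) ℝ)
    (hΔL : ∀ ω, ΔLdot ω = Ldot ω - (ℳ ω)⁻¹ * ML ω)
    (hint1 : ∀ i j, Integrable (fun ω => ((Z ω)ᵀ * M ω * ΔLdot ω) i j) μ)
    (hint3 : ∀ i s t, Integrable (fun ω => ((Z ω)ᵀ * M ω) i s * udot ω t) μ)
    (B : Matrix (Fin q) (Fin q) ℝ)
    (hB : ∀ i j, B i j = ∫ ω, ((Z ω)ᵀ * M ω * ΔLdot ω) i j ∂μ)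
    (hBinv : IsUnit B) :
    (∀ᵐ ω ∂μ, M ω *ᵥ Δydot ω = (M ω * ΔLdot ω) *ᵥ b + M ω *ᵥ udot ω)
      ∧ b = B⁻¹ *ᵥ fun j => ∫ ω, ((Z ω)ᵀ *ᵥ (M ω *ᵥ Δydot ω)) j ∂μ := by
  have hMmul : ∀ s t {f : Ω → ℝ}, Integrable f μ → Integrable (fun ω => M ω s t * f ω) μ :=
    fun s t _ hf => hf.bdd_mul ((hMmeas s t).mono hℋ).aestronglyMeasurable
      (ae_of_all _ fun ω => (Real.norm_eq_abs _).trans_le (hMbdd ω s t))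
  have hMint : ∀ s t, Integrable (fun ω => M ω s t) μ := fun s t => by
    simpa using hMmul s t (integrable_const (1 : ℝ))
  have hMLint : ∀ s j, Integrable (fun ω => (M ω * Ldot ω) s j) μ := fun s j =>
    integrable_mulVec_apply (v := fun ω t => Ldot ω t j) (fun s t => hMmul s t (hLint t j)) s
  have hk_ae : ∀ᵐ ω ∂μ, k ω = ML ω *ᵥ b + ℳ ω *ᵥ g ω := by
    refine (ae_all_iff.2 fun s => ?_).mono fun ω hω => funext hω
    have hMydot : (fun ω => (M ω *ᵥ ydot ω) s)
        =ᵐ[μ] fun ω => (M ω *ᵥ (Ldot ω *ᵥ b + g ω + udot ω)) s := by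
      filter_upwards [hMh] with ω hω
      simp [hy ω, mulVec_add, hω]
    change (fun ω => k ω s) =ᵐ[μ] _
    rw [hk s]
    exact (condExp_congr_ae hMydot).trans (condExp_mulVec_mulVec_add_add h𝒢ℋ hℋ b hℳ hML hMmeas
      hMint hMLint hgmeas (fun s t => hMmul s t (hgint.eval t)) huint.eval
      (fun s t => hMmul s t (huint.eval t)) hu s)
  have hresidual : ∀ᵐ ω ∂μ, M ω *ᵥ Δydot ω = (M ω * ΔLdot ω) *ᵥ b + M ω *ᵥ udot ω := by
    filter_upwards [hk_ae, hℳinv, hMh] with ω hkω hℳω hMhω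
    rw [hΔy, hΔL, hy, hkω]
    exact mulVec_sub_nonsing_inv_mulVec_eq hℳω _ _ b _ _ _ hMhω
  refine ⟨hresidual, ?_⟩
  rw [integral_mulVec_mulVec_eq_mulVec (W := fun ω => (Z ω)ᵀ) hℋ hresidual
    (fun i s => hZmeas s i) hMmeas hint1 hB (fun i t => hint3 i t t) huint.eval hu, mulVec_mulVec,
    nonsing_inv_mul B ((isUnit_iff_isUnit_det B).1 hBinv), one_mulVec]

/-- Robinson-type identification of the homogeneous coefficient `b` in the model combining
random coefficients with common parameters: `M ·ᵥ Δẏ = (M·ΔL̇) ·ᵥ b + M ·ᵥ u̇` a.e., and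
consequently `b = B⁻¹ · ∫ Żᵀ ·ᵥ (M ·ᵥ Δẏ) dμ`. -/
theorem homogeneous_coefficient_identification
    {Ω : Type*} {mΩ : MeasurableSpace Ω} (μ : Measure Ω) [IsProbabilityMeasure μ]
    (𝒢 ℋ : MeasurableSpace Ω) (h𝒢ℋ : 𝒢 ≤ ℋ) (hℋ : ℋ ≤ mΩ)
    (m q : ℕ) (hm : 0 < m) (hq : 0 < q)
    (M : Ω → Matrix (Fin m) (Fin m) ℝ)
    (hMmeas : ∀ s t, StronglyMeasurable[ℋ] fun ω => M ω s t)
    (hMbdd : ∀ ω s t, |M ω s t| ≤ 1)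
    (Ldot Z : Ω → Matrix (Fin m) (Fin q) ℝ)
    (hLmeas : ∀ s j, StronglyMeasurable[ℋ] fun ω => Ldot ω s j)
    (hLint : ∀ s j, Integrable (fun ω => Ldot ω s j) μ)
    (hZmeas : ∀ s j, StronglyMeasurable[ℋ] fun ω => Z ω s j)
    (hZint : ∀ s j, Integrable (fun ω => Z ω s j) μ)
    (g : Ω → Fin m → ℝ) (hgmeas : ∀ s, StronglyMeasurable[𝒢] fun ω => g ω s)
    (hgint : Integrable g μ)
    (udot : Ω → Fin m → ℝ) (huint : Integrable udot μ)
    (hu : ∀ s, μ[(fun ω => udot ω s) | ℋ] =ᵐ[μ] 0)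
    (h : Ω → Fin m → ℝ) (hhint : Integrable h μ) (hMh : ∀ᵐ ω ∂μ, M ω *ᵥ h ω = 0)
    (b : Fin q → ℝ)
    (ydot : Ω → Fin m → ℝ) (hy : ∀ ω, ydot ω = Ldot ω *ᵥ b + g ω + h ω + udot ω)
    (ℳ : Ω → Matrix (Fin m) (Fin m) ℝ)
    (hℳ : ∀ s t, (fun ω => ℳ ω s t) = μ[(fun ω => M ω s t) | 𝒢])
    (hℳinv : ∀ᵐ ω ∂μ, IsUnit (ℳ ω))
    (ML : Ω → Matrix (Fin m) (Fin q) ℝ)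
    (hML : ∀ s j, (fun ω => ML ω s j) = μ[(fun ω => (M ω * Ldot ω) s j) | 𝒢])
    (k : Ω → Fin m → ℝ)
    (hk : ∀ s, (fun ω => k ω s) = μ[(fun ω => (M ω *ᵥ ydot ω) s) | 𝒢])
    (Δydot : Ω → Fin m → ℝ) (hΔy : ∀ ω, Δydot ω = ydot ω - (ℳ ω)⁻¹ *ᵥ k ω)
    (ΔLdot : Ω → Matrix (Fin m) (Fin q) ℝ)
    (hΔL : ∀ ω, ΔLdot ω = Ldot ω - (ℳ ω)⁻¹ * ML ω)
    (hint1 : ∀ i j, Integrable (fun ω => ((Z ω)ᵀ * M ω * ΔLdot ω) i j) μ)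
    (hint2 : ∀ j, Integrable (fun ω => ((Z ω)ᵀ *ᵥ (M ω *ᵥ Δydot ω)) j) μ)
    (hint3 : ∀ i s t, Integrable (fun ω => ((Z ω)ᵀ * M ω) i s * udot ω t) μ)
    (B : Matrix (Fin q) (Fin q) ℝ)
    (hB : ∀ i j, B i j = ∫ ω, ((Z ω)ᵀ * M ω * ΔLdot ω) i j ∂μ)
    (hBinv : IsUnit B) :
    (∀ᵐ ω ∂μ, M ω *ᵥ Δydot ω = (M ω * ΔLdot ω) *ᵥ b + M ω *ᵥ udot ω)
      ∧ b = B⁻¹ *ᵥ fun j => ∫ ω, ((Z ω)ᵀ *ᵥ (M ω *ᵥ Δydot ω)) j ∂μ :=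
  homogeneous_coefficient_identification_general μ 𝒢 ℋ h𝒢ℋ hℋ m q M hMmeas hMbdd Ldot Z hLint hZmeas
    g hgmeas hgint udot huint hu h hMh b ydot hy ℳ hℳ hℳinv ML hML k hk Δydot hΔy ΔLdot hΔL hint1
    hint3 B hB hBinv
end

section
/- Assume: (i) for every sequence (δ_n) of positive reals converging to 0 and every ε > 0, P({ω : sup_{G ∈ H, ‖G − G₀‖ ≤ δ_n} √n·‖𝒳_n(ω)(G) − 𝒳(G) − 𝒳_n(ω)(G₀)‖ > ε}) → 0 as n → ∞; (ii) there exist c ≥ 0 and δ̄ > 0 such that ‖𝒳(G) − L(G − G₀)‖ ≤ c·‖G − G₀‖² for every G with ‖G − G₀‖ ≤ δ̄; (iii) for every ε > 0, P({ω : n^{1/4}·‖Ĝ_n(ω) − G₀‖ > ε}) → 0 as n → ∞. Then for every ε > 0, P({ω : √n·‖𝒳_n(ω)(Ĝ_n(ω)) − 𝒳_n(ω)(G₀) − L(Ĝ_n(ω) − G₀)‖ > ε}) → 0 as n → ∞; that is, √n[𝒳_n(Ĝ_n) − 𝒳_n(G₀)] = √n·L[Ĝ_n − G₀] + o_P(1).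 -/
/-!
Split `𝒳_n(Ĝ_n) − 𝒳_n(G₀) − L(Ĝ_n − G₀)` as `[𝒳_n(Ĝ_n) − 𝒳(Ĝ_n) − 𝒳_n(G₀)] + [𝒳(Ĝ_n) − L(Ĝ_n − G₀)]`.
On the event `n^{1/4}‖Ĝ_n − G₀‖ ≤ η ≤ 1` the estimator lies within `δ_n = n^{-1/4}` of `G₀`, so the
first bracket is controlled by stochastic equicontinuity, and the second by the quadratic remainder
bound: `√n · c‖Ĝ_n − G₀‖² = c (n^{1/4}‖Ĝ_n − G₀‖)² ≤ c η²`, which is small for small `η`.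
-/

open MeasureTheory Filter Topology

theorem tendsto_measure_of_eventually_subset_union {Ω ι : Type*} {_ : MeasurableSpace Ω}
    (μ : Measure Ω) {l : Filter ι} {A B C : ι → Set Ω}
    (hA : Tendsto (fun i => μ (A i)) l (𝓝 0)) (hB : Tendsto (fun i => μ (B i)) l (𝓝 0))
    (hC : ∀ᶠ i in l, C i ⊆ A i ∪ B i) :
    Tendsto (fun i => μ (C i)) l (𝓝 0) := by
  refine tendsto_of_tendsto_of_tendsto_of_le_of_le' tendsto_const_nhds
    (by simpa using hA.add hB) (Eventually.of_forall fun _ => zero_le) ?_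
  filter_upwards [hC] with i hi
  exact (measure_mono hi).trans (measure_union_le _ _)

theorem exists_pos_le_one_mul_sq_le (c : ℝ) {ε : ℝ} (hε : 0 < ε) :
    ∃ η : ℝ, 0 < η ∧ η ≤ 1 ∧ c * η ^ 2 ≤ ε := by
  have hlim : Tendsto (fun η : ℝ => c * η ^ 2) (𝓝[>] 0) (𝓝 0) :=
    (Continuous.tendsto' (by fun_prop) 0 0 (by simp)).mono_left nhdsWithin_le_nhds
  obtain ⟨η, hcη, hη⟩ := ((hlim.eventually (ge_mem_nhds hε)).and (Ioc_mem_nhdsGT one_pos)).exists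
  exact ⟨η, hη.1, hη.2, hcη⟩

theorem Real.le_rpow_neg_of_rpow_mul_le_one {x p r : ℝ} (hx : 0 < x) (h : x ^ p * r ≤ 1) :
    r ≤ x ^ (-p) := by
  rwa [Real.rpow_neg hx.le, ← one_div, le_div_iff₀' (Real.rpow_pos_of_pos hx p)]

theorem Real.sqrt_eq_rpow_quarter_sq {x : ℝ} (hx : 0 ≤ x) : √x = (x ^ (1 / 4 : ℝ)) ^ 2 := by
  rw [← Real.rpow_natCast, ← Real.rpow_mul hx, Real.sqrt_eq_rpow]
  norm_num

theorem tendsto_max_one_rpow_neg_atTop {p : ℝ} (hp : 0 < p) :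
    Tendsto (fun n : ℕ => max (n : ℝ) 1 ^ (-p)) atTop (𝓝 0) :=
  (tendsto_rpow_neg_atTop hp).comp
    (tendsto_atTop_mono (fun _ => le_max_left _ _) tendsto_natCast_atTop_atTop)

theorem norm_sub_sub_map_sub_le {H F : Type*} [AddCommGroup H] [SeminormedAddCommGroup F]
    (y X L : H → F) (G G₀ : H) :
    ‖y G - y G₀ - L (G - G₀)‖ ≤ ‖y G - X G - y G₀‖ + ‖X G - L (G - G₀)‖ := by
  calc ‖y G - y G₀ - L (G - G₀)‖ = ‖(y G - X G - y G₀) + (X G - L (G - G₀))‖ := by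
        congr 1; abel
    _ ≤ _ := norm_add_le _ _

theorem sqrt_mul_norm_linearization_le {H F : Type*} [SeminormedAddCommGroup H]
    [SeminormedAddCommGroup F] {y X L : H → F} {G G₀ : H} {x c η ε : ℝ} (hx : 0 ≤ x)
    (hc : 0 ≤ c) (hcη : c * η ^ 2 ≤ ε / 2) (hrate : x ^ (1 / 4 : ℝ) * ‖G - G₀‖ ≤ η)
    (hquad : ‖X G - L (G - G₀)‖ ≤ c * ‖G - G₀‖ ^ 2)
    (hequi : √x * ‖y G - X G - y G₀‖ ≤ ε / 2) :
    √x * ‖y G - y G₀ - L (G - G₀)‖ ≤ ε := by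
  have hremainder : √x * ‖X G - L (G - G₀)‖ ≤ ε / 2 :=
    calc √x * ‖X G - L (G - G₀)‖ ≤ √x * (c * ‖G - G₀‖ ^ 2) := by gcongr
      _ = c * (x ^ (1 / 4 : ℝ) * ‖G - G₀‖) ^ 2 := by rw [Real.sqrt_eq_rpow_quarter_sq hx]; ring
      _ ≤ c * η ^ 2 := by gcongr
      _ ≤ ε / 2 := hcη
  calc √x * ‖y G - y G₀ - L (G - G₀)‖
      ≤ √x * (‖y G - X G - y G₀‖ + ‖X G - L (G - G₀)‖) := by
        gcongr; exact norm_sub_sub_map_sub_le y X L G G₀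
    _ ≤ ε / 2 + ε / 2 := by rw [mul_add]; exact add_le_add hequi hremainder
    _ = ε := add_halves ε

theorem empirical_functional_linearization_general
    {Ω : Type*} {mΩ : MeasurableSpace Ω} (P : Measure Ω)
    {H : Type*} [NormedAddCommGroup H] [NormedSpace ℝ H]
    (G₀ : H) (d : ℕ)
    (Xn : ℕ → Ω → H → EuclideanSpace ℝ (Fin d))
    (X : H → EuclideanSpace ℝ (Fin d))
    (L : H →L[ℝ] EuclideanSpace ℝ (Fin d))
    (Ghat : ℕ → Ω → H)
    (hSE : ∀ δ : ℕ → ℝ, (∀ n, 0 < δ n) → Tendsto δ atTop (nhds 0) →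
      ∀ ε > (0 : ℝ), Tendsto
        (fun (n : ℕ) => P {ω | ∃ G : H, ‖G - G₀‖ ≤ δ n ∧
          ε < Real.sqrt n * ‖Xn n ω G - X G - Xn n ω G₀‖})
        atTop (nhds 0))
    (hDeriv : ∃ c : ℝ, 0 ≤ c ∧ ∃ δbar : ℝ, 0 < δbar ∧ ∀ G : H, ‖G - G₀‖ ≤ δbar →
      ‖X G - L (G - G₀)‖ ≤ c * ‖G - G₀‖ ^ 2)
    (hRate : ∀ ε > (0 : ℝ), Tendsto
      (fun (n : ℕ) => P {ω | ε < (n : ℝ) ^ ((1 : ℝ) / 4) * ‖Ghat n ω - G₀‖})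
      atTop (nhds 0)) :
    ∀ ε > (0 : ℝ), Tendsto
      (fun (n : ℕ) => P {ω | ε < Real.sqrt n *
        ‖Xn n ω (Ghat n ω) - Xn n ω G₀ - L (Ghat n ω - G₀)‖})
      atTop (nhds 0) := by
  intro ε hε
  obtain ⟨c, hc, δbar, hδbar, hquad⟩ := hDeriv
  obtain ⟨η, hη, hη1, hcη⟩ := exists_pos_le_one_mul_sq_le c (half_pos hε)
  -- `max` keeps `δ 0` positive, since `(0 : ℝ) ^ (-1/4) = 0`.
  set δ : ℕ → ℝ := fun n => max (n : ℝ) 1 ^ (-(1 / 4 : ℝ))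
  have hδ : Tendsto δ atTop (𝓝 0) := tendsto_max_one_rpow_neg_atTop (by norm_num)
  have hδpos : ∀ n, 0 < δ n := fun n => Real.rpow_pos_of_pos (by positivity) _
  refine tendsto_measure_of_eventually_subset_union P (hRate η hη)
    (hSE δ hδpos hδ (ε / 2) (half_pos hε)) ?_
  filter_upwards [eventually_ge_atTop 1, hδ.eventually (ge_mem_nhds hδbar)] with n hn hδn ω hω
  by_contra hout
  simp only [Set.mem_union, Set.mem_ofPred_eq, not_or, not_exists, not_and, not_lt] at hout
  obtain ⟨hrate, hequi⟩ := hout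
  have hnδ : ‖Ghat n ω - G₀‖ ≤ δ n := by
    have hmax : max (n : ℝ) 1 = n := max_eq_left (by exact_mod_cast hn)
    simpa only [δ, hmax] using Real.le_rpow_neg_of_rpow_mul_le_one (by positivity) (hrate.trans hη1)
  exact hω.not_ge <| sqrt_mul_norm_linearization_le (Nat.cast_nonneg n) hc hcη hrate
    (hquad _ (hnδ.trans hδn)) (hequi _ hnδ)

/-- Linearization of the empirical functional (Result `rslt:X_linear`): under stochastic
equicontinuity, a quadratic remainder bound for the pathwise derivative `L` of `𝒳` at `G₀`,
and an `o_P(n^{-1/4})` convergence rate of the estimator `Ĝ_n`, one has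
`√n[𝒳_n(Ĝ_n) − 𝒳_n(G₀)] = √n·L[Ĝ_n − G₀] + o_P(1)`. -/
theorem empirical_functional_linearization
    {Ω : Type*} {mΩ : MeasurableSpace Ω} (P : Measure Ω) [IsProbabilityMeasure P]
    {H : Type*} [NormedAddCommGroup H] [NormedSpace ℝ H]
    [MeasurableSpace H] [BorelSpace H]
    (G₀ : H) (d : ℕ) (hd : 0 < d)
    (Xn : ℕ → Ω → H → EuclideanSpace ℝ (Fin d))
    (X : H → EuclideanSpace ℝ (Fin d)) (hX0 : X G₀ = 0)
    (L : H →L[ℝ] EuclideanSpace ℝ (Fin d))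
    (Ghat : ℕ → Ω → H) (hGhat_meas : ∀ n, Measurable (Ghat n))
    (hSE : ∀ δ : ℕ → ℝ, (∀ n, 0 < δ n) → Tendsto δ atTop (nhds 0) →
      ∀ ε > (0 : ℝ), Tendsto
        (fun (n : ℕ) => P {ω | ∃ G : H, ‖G - G₀‖ ≤ δ n ∧
          ε < Real.sqrt n * ‖Xn n ω G - X G - Xn n ω G₀‖})
        atTop (nhds 0))
    (hDeriv : ∃ c : ℝ, 0 ≤ c ∧ ∃ δbar : ℝ, 0 < δbar ∧ ∀ G : H, ‖G - G₀‖ ≤ δbar →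
      ‖X G - L (G - G₀)‖ ≤ c * ‖G - G₀‖ ^ 2)
    (hRate : ∀ ε > (0 : ℝ), Tendsto
      (fun (n : ℕ) => P {ω | ε < (n : ℝ) ^ ((1 : ℝ) / 4) * ‖Ghat n ω - G₀‖})
      atTop (nhds 0)) :
    ∀ ε > (0 : ℝ), Tendsto
      (fun (n : ℕ) => P {ω | ε < Real.sqrt n *
        ‖Xn n ω (Ghat n ω) - Xn n ω G₀ - L (Ghat n ω - G₀)‖})
      atTop (nhds 0) :=
  empirical_functional_linearization_general (mΩ := mΩ) P G₀ d Xn X L Ghat hSE hDeriv hRate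
end

section
/- Let m be a positive integer, c > 0, and let A, B be symmetric m×m real matrices with x ⬝ᵥ (A ·ᵥ x) ≥ c·‖x‖² and x ⬝ᵥ (B ·ᵥ x) ≥ (c/2)·‖x‖² for every x ∈ ℝ^m (so A and B are invertible). Then for all vectors k, k′ ∈ ℝ^m: ‖A⁻¹ ·ᵥ k − B⁻¹ ·ᵥ k′‖ ≤ (2/c²)·‖A − B‖_F·‖k‖ + (2/c)·‖k − k′‖. -/
open Matrix

section Aux

variable {m : ℕ}

noncomputable def nE (v : Fin m → ℝ) : ℝ := Real.sqrt (v ⬝ᵥ v)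

lemma dotSelf_nonneg (v : Fin m → ℝ) : 0 ≤ v ⬝ᵥ v :=
  Finset.sum_nonneg fun _ _ => mul_self_nonneg _

lemma nE_nonneg (v : Fin m → ℝ) : 0 ≤ nE v := Real.sqrt_nonneg _

lemma nE_mul_self (v : Fin m → ℝ) : nE v * nE v = v ⬝ᵥ v :=
  Real.mul_self_sqrt (dotSelf_nonneg v)

lemma dotSelf_eq_sum_sq (v : Fin m → ℝ) : v ⬝ᵥ v = ∑ i, v i ^ 2 := by
  simp [dotProduct, sq]

lemma dot_le_nE (u v : Fin m → ℝ) : u ⬝ᵥ v ≤ nE u * nE v := by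
  have h := Finset.sum_mul_sq_le_sq_mul_sq Finset.univ u v
  have h1 : u ⬝ᵥ v ≤ Real.sqrt ((u ⬝ᵥ v) ^ 2) := by
    rw [Real.sqrt_sq_eq_abs]; exact le_abs_self _
  calc u ⬝ᵥ v ≤ Real.sqrt ((u ⬝ᵥ v) ^ 2) := h1
    _ ≤ Real.sqrt ((u ⬝ᵥ u) * (v ⬝ᵥ v)) := by
        apply Real.sqrt_le_sqrt
        simpa [dotProduct, sq, dotSelf_eq_sum_sq] using h
    _ = nE u * nE v := Real.sqrt_mul (dotSelf_nonneg u) _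

lemma nE_add_le (u v : Fin m → ℝ) : nE (u + v) ≤ nE u + nE v := by
  have hexp : (u + v) ⬝ᵥ (u + v) = u ⬝ᵥ u + 2 * (u ⬝ᵥ v) + v ⬝ᵥ v := by
    rw [add_dotProduct, dotProduct_add, dotProduct_add, dotProduct_comm v u]
    ring
  have h2 : (u + v) ⬝ᵥ (u + v) ≤ (nE u + nE v) ^ 2 := by
    rw [hexp]
    have := dot_le_nE u v
    nlinarith [nE_mul_self u, nE_mul_self v]
  calc nE (u + v) ≤ Real.sqrt ((nE u + nE v) ^ 2) := Real.sqrt_le_sqrt h2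
    _ = nE u + nE v := Real.sqrt_sq (add_nonneg (nE_nonneg u) (nE_nonneg v))

/-- Operator bound by Frobenius norm. -/
lemma nE_mulVec_le (M : Matrix (Fin m) (Fin m) ℝ) (x : Fin m → ℝ) :
    nE (M *ᵥ x) ≤ Real.sqrt (∑ i, ∑ j, (M i j) ^ 2) * nE x := by
  have hb : (M *ᵥ x) ⬝ᵥ (M *ᵥ x) ≤ (∑ i, ∑ j, (M i j) ^ 2) * (x ⬝ᵥ x) := by
    rw [dotSelf_eq_sum_sq, Finset.sum_mul]
    apply Finset.sum_le_sum
    intro i _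
    have := Finset.sum_mul_sq_le_sq_mul_sq Finset.univ (M i) x
    calc (M *ᵥ x) i ^ 2 = (∑ j, M i j * x j) ^ 2 := by rfl
      _ ≤ (∑ j, (M i j) ^ 2) * (∑ j, (x j) ^ 2) := this
      _ = (∑ j, (M i j) ^ 2) * (x ⬝ᵥ x) := by rw [dotSelf_eq_sum_sq]
  calc nE (M *ᵥ x) ≤ Real.sqrt ((∑ i, ∑ j, (M i j) ^ 2) * (x ⬝ᵥ x)) :=
        Real.sqrt_le_sqrt hb
    _ = Real.sqrt (∑ i, ∑ j, (M i j) ^ 2) * nE x :=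
        Real.sqrt_mul (by positivity) _

/-- Coercivity gives a lower bound on `‖Ax‖`. -/
lemma coercive_nE {c : ℝ} {A : Matrix (Fin m) (Fin m) ℝ}
    (hA : ∀ x : Fin m → ℝ, c * (x ⬝ᵥ x) ≤ x ⬝ᵥ (A *ᵥ x)) (x : Fin m → ℝ) :
    c * nE x ≤ nE (A *ᵥ x) := by
  have h1 : c * (nE x * nE x) ≤ nE x * nE (A *ᵥ x) := by
    rw [nE_mul_self]
    exact (hA x).trans (dot_le_nE x _)
  rcases eq_or_lt_of_le (nE_nonneg x) with h0 | h0
  · rw [← h0, mul_zero]; exact nE_nonneg _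
  · have := mul_le_mul_of_nonneg_left h1 (le_of_lt (inv_pos.mpr h0))
    calc c * nE x = (nE x)⁻¹ * (c * (nE x * nE x)) := by field_simp
      _ ≤ (nE x)⁻¹ * (nE x * nE (A *ᵥ x)) := this
      _ = nE (A *ᵥ x) := by field_simp

lemma coercive_isUnit {c : ℝ} (hc : 0 < c) {A : Matrix (Fin m) (Fin m) ℝ}
    (hA : ∀ x : Fin m → ℝ, c * (x ⬝ᵥ x) ≤ x ⬝ᵥ (A *ᵥ x)) : IsUnit A := by
  rw [← Matrix.mulVec_injective_iff_isUnit]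
  intro x y hxy
  have hz : A *ᵥ (x - y) = 0 := by rw [Matrix.mulVec_sub, hxy, sub_self]
  have h1 : c * ((x - y) ⬝ᵥ (x - y)) ≤ 0 := by
    have := hA (x - y); rwa [hz, dotProduct_zero] at this
  have h2 : (x - y) ⬝ᵥ (x - y) = 0 :=
    le_antisymm (by nlinarith [dotSelf_nonneg (x - y)]) (dotSelf_nonneg _)
  exact sub_eq_zero.mp (dotProduct_self_eq_zero.mp h2)

end Aux

/-- Perturbation bound for inverses of symmetric coercive matrices (used for the rate of
the plug-in estimator `ĝ = ℳ̂⁻¹k̂`): if `A, B` are symmetric with `xᵀAx ≥ c‖x‖²` and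
`xᵀBx ≥ (c/2)‖x‖²`, then
`‖A⁻¹k − B⁻¹k′‖ ≤ (2/c²)·‖A − B‖_F·‖k‖ + (2/c)·‖k − k′‖` (Euclidean/Frobenius norms). -/
theorem inverse_perturbation_bound
    (m : ℕ) (hm : 0 < m) (c : ℝ) (hc : 0 < c)
    (A B : Matrix (Fin m) (Fin m) ℝ)
    (hAsym : Aᵀ = A) (hBsym : Bᵀ = B)
    (hA : ∀ x : Fin m → ℝ, c * (x ⬝ᵥ x) ≤ x ⬝ᵥ (A *ᵥ x))
    (hB : ∀ x : Fin m → ℝ, (c / 2) * (x ⬝ᵥ x) ≤ x ⬝ᵥ (B *ᵥ x)) :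
    ∀ k k' : Fin m → ℝ,
      Real.sqrt ((A⁻¹ *ᵥ k - B⁻¹ *ᵥ k') ⬝ᵥ (A⁻¹ *ᵥ k - B⁻¹ *ᵥ k'))
        ≤ (2 / c ^ 2) * Real.sqrt (∑ i, ∑ j, ((A - B) i j) ^ 2) * Real.sqrt (k ⬝ᵥ k)
          + (2 / c) * Real.sqrt ((k - k') ⬝ᵥ (k - k')) := by
  intro k k'
  have hcne : c ≠ 0 := ne_of_gt hc
  have hAunit : IsUnit A := coercive_isUnit hc hA
  have hBunit : IsUnit B := coercive_isUnit (by positivity) hB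
  have hAdet : IsUnit A.det := (Matrix.isUnit_iff_isUnit_det A).mp hAunit
  have hBdet : IsUnit B.det := (Matrix.isUnit_iff_isUnit_det B).mp hBunit
  set u : Fin m → ℝ := A⁻¹ *ᵥ k with hu
  have hAu : A *ᵥ u = k := by
    rw [hu, Matrix.mulVec_mulVec, Matrix.mul_nonsing_inv _ hAdet, Matrix.one_mulVec]
  have hBinv : ∀ z : Fin m → ℝ, B⁻¹ *ᵥ (B *ᵥ z) = z := fun z => by
    rw [Matrix.mulVec_mulVec, Matrix.nonsing_inv_mul _ hBdet, Matrix.one_mulVec]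
  have hBinv' : ∀ z : Fin m → ℝ, B *ᵥ (B⁻¹ *ᵥ z) = z := fun z => by
    rw [Matrix.mulVec_mulVec, Matrix.mul_nonsing_inv _ hBdet, Matrix.one_mulVec]
  -- the decomposition
  have key : A⁻¹ *ᵥ k - B⁻¹ *ᵥ k'
      = B⁻¹ *ᵥ ((B - A) *ᵥ u) + B⁻¹ *ᵥ (k - k') := by
    rw [Matrix.sub_mulVec, hAu, Matrix.mulVec_sub, Matrix.mulVec_sub, hBinv]
    abel
  -- bound on `B⁻¹ z`
  have hBinv_le : ∀ z : Fin m → ℝ, nE (B⁻¹ *ᵥ z) ≤ (2 / c) * nE z := by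
    intro z
    have h1 : (c / 2) * nE (B⁻¹ *ᵥ z) ≤ nE z := by
      have := coercive_nE hB (B⁻¹ *ᵥ z)
      rwa [hBinv' z] at this
    have hone : (2 / c) * (c / 2) = 1 := by field_simp
    calc nE (B⁻¹ *ᵥ z) = (2 / c) * ((c / 2) * nE (B⁻¹ *ᵥ z)) := by
          rw [← mul_assoc, hone, one_mul]
      _ ≤ (2 / c) * nE z := mul_le_mul_of_nonneg_left h1 (by positivity)
  -- bound on `u`
  have hu_le : nE u ≤ (1 / c) * nE k := by
    have h1 : c * nE u ≤ nE k := by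
      have := coercive_nE hA u; rwa [hAu] at this
    have hone : (1 / c) * c = 1 := by field_simp
    calc nE u = (1 / c) * (c * nE u) := by rw [← mul_assoc, hone, one_mul]
      _ ≤ (1 / c) * nE k := mul_le_mul_of_nonneg_left h1 (by positivity)
  -- Frobenius norms of `B - A` and `A - B` agree
  have hF : Real.sqrt (∑ i, ∑ j, ((B - A) i j) ^ 2)
      = Real.sqrt (∑ i, ∑ j, ((A - B) i j) ^ 2) := by
    congr 1
    refine Finset.sum_congr rfl fun i _ => Finset.sum_congr rfl fun j _ => ?_
    simp only [Matrix.sub_apply]; ring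
  set F : ℝ := Real.sqrt (∑ i, ∑ j, ((A - B) i j) ^ 2) with hFdef
  have hFnn : 0 ≤ F := Real.sqrt_nonneg _
  have hw : nE ((B - A) *ᵥ u) ≤ F * nE u := by
    have := nE_mulVec_le (B - A) u
    rwa [hF] at this
  have ht1 : nE (B⁻¹ *ᵥ ((B - A) *ᵥ u)) ≤ (2 / c) * (F * ((1 / c) * nE k)) := by
    refine (hBinv_le _).trans (mul_le_mul_of_nonneg_left ?_ (by positivity))
    exact hw.trans (mul_le_mul_of_nonneg_left hu_le hFnn)
  have ht2 : nE (B⁻¹ *ᵥ (k - k')) ≤ (2 / c) * nE (k - k') := hBinv_le _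
  have hmain : nE (A⁻¹ *ᵥ k - B⁻¹ *ᵥ k')
      ≤ (2 / c) * (F * ((1 / c) * nE k)) + (2 / c) * nE (k - k') := by
    rw [key]
    exact (nE_add_le _ _).trans (add_le_add ht1 ht2)
  have heq : (2 / c) * (F * ((1 / c) * nE k)) = (2 / c ^ 2) * F * nE k := by
    field_simp
  show nE (A⁻¹ *ᵥ k - B⁻¹ *ᵥ k') ≤ (2 / c ^ 2) * F * nE k + (2 / c) * nE (k - k')
  rw [← heq]
  exact hmain
end
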